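/- arXiv:1702.08156 — 9 statements merged into one kernel-verified Lean document; each statement's English description precedes it below -/
import Mathlib

section
/- For any two distinct positive integers m and n, there exists a unique infinite sequence K with values in {m, n} whose first term is m and which equals the sequence of run-lengths of itself, i.e., R(K) = K. -/
/-- `InfRunLengthsIs s r` : the infinite sequence `r` is the sequence of run-lengths
of the infinite sequence `s` (witnessed by the sequence `b` of block boundaries). -/
def InfRunLengthsIs (s r : ℕ → ℕ) : Prop :=
  ∃ b : ℕ → ℕ, b 0 = 0 ∧ StrictMono b ∧
    (∀ k i, b k ≤ i → i < b (k + 1) → s i = s (b k)) ∧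
    (∀ k, s (b (k + 1)) ≠ s (b k)) ∧
    (∀ k, r k = b (k + 1) - b k)

/-!
The values of a self-describing sequence `K` over `{m, n}` starting with `m` are forced run by
run: the `k`-th run has value `m` or `n` according to the parity of `k`, and its length is `K k`.
Since every run is nonempty, the run containing position `i` has index at most `i`, and it ends at
position `i` exactly when `K 0 + ⋯ + K (c i) = i + 1`, where `c i` is its index. Thus the run
indices are computed by a recursion that only looks at earlier positions; this recursion defines
the sequence, and any other self-describing sequence agrees with it by strong induction.
-/

open Finset

/-- The witness of `InfRunLengthsIs s r` is necessarily the sequence of partial sums of `r`. -/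
theorem infRunLengthsIs_iff {s r : ℕ → ℕ} :
    InfRunLengthsIs s r ↔ (∀ k, 0 < r k) ∧
      (∀ k i, ∑ j ∈ range k, r j ≤ i → i < ∑ j ∈ range (k + 1), r j →
        s i = s (∑ j ∈ range k, r j)) ∧
      ∀ k, s (∑ j ∈ range (k + 1), r j) ≠ s (∑ j ∈ range k, r j) := by
  constructor
  · rintro ⟨b, hb0, hmono, hconst, halt, hlen⟩
    have hb : b = fun k => ∑ j ∈ range k, r j := by
      funext k
      induction k with
      | zero => simp [hb0]
      | succ k ih =>
        have := hmono (lt_add_one k)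
        rw [sum_range_succ, ← ih, hlen k]
        omega
    subst hb
    refine ⟨fun k => ?_, hconst, halt⟩
    have := hmono (lt_add_one k)
    rw [hlen]
    omega
  · rintro ⟨hpos, hconst, halt⟩
    refine ⟨fun k => ∑ j ∈ range k, r j, by simp,
      strictMono_nat_of_lt_succ fun k => ?_, hconst, halt, fun k => ?_⟩
    · simp [sum_range_succ, hpos k]
    · simp [sum_range_succ]

namespace Kolakoski

variable (m n : ℕ)

def runValue (k : ℕ) : ℕ := if Even k then m else n

/-- The index of the run containing position `i`. The `min j i` only makes the recursion visibly
well founded: it equals `j` because `runIdx m n i ≤ i` (`runIdx_succ`). -/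
def runIdx : ℕ → ℕ
  | 0 => 0
  | i + 1 =>
    if ∑ j ∈ range (runIdx i + 1), runValue m n (runIdx (min j i)) = i + 1 then runIdx i + 1
    else runIdx i

def seq (i : ℕ) : ℕ := runValue m n (runIdx m n i)

def boundary (k : ℕ) : ℕ := ∑ j ∈ range k, seq m n j

variable {m n}

theorem runValue_zero : runValue m n 0 = m := by simp [runValue]

theorem runValue_mem (k : ℕ) : runValue m n k = m ∨ runValue m n k = n := by
  unfold runValue; split <;> simp

theorem runValue_succ_ne (hmn : m ≠ n) (k : ℕ) : runValue m n (k + 1) ≠ runValue m n k := by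
  by_cases h : Even k <;> simp [runValue, h, Nat.even_add_one, hmn, hmn.symm]

theorem eq_runValue_succ {x : ℕ} (k : ℕ) (hx : x = m ∨ x = n) (hne : x ≠ runValue m n k) :
    x = runValue m n (k + 1) := by
  by_cases h : Even k <;> simp_all [runValue, Nat.even_add_one]

theorem apply_eq_runValue {s b : ℕ → ℕ} (hs : ∀ i, s i = m ∨ s i = n) (h0 : s (b 0) = m)
    (halt : ∀ k, s (b (k + 1)) ≠ s (b k)) (k : ℕ) : s (b k) = runValue m n k := by
  induction k with
  | zero => rw [h0, runValue_zero]
  | succ k ih => exact eq_runValue_succ k (hs _) (ih ▸ halt k)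

variable (m n)

theorem runIdx_zero : runIdx m n 0 = 0 := by simp [runIdx]

theorem runIdx_le (i : ℕ) : runIdx m n i ≤ i := by
  induction i with
  | zero => simp [runIdx_zero]
  | succ i ih => rw [runIdx]; split <;> omega

theorem runIdx_succ (i : ℕ) : runIdx m n (i + 1) =
    if boundary m n (runIdx m n i + 1) = i + 1 then runIdx m n i + 1 else runIdx m n i := by
  have hmin : ∀ j ∈ range (runIdx m n i + 1),
      runValue m n (runIdx m n (min j i)) = seq m n j := by
    intro j hj
    have := runIdx_le m n i
    rw [mem_range] at hj
    rw [seq, min_eq_left (by omega)]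
  rw [runIdx, sum_congr rfl hmin, boundary]

theorem seq_mem (i : ℕ) : seq m n i = m ∨ seq m n i = n := runValue_mem _

theorem seq_zero : seq m n 0 = m := by rw [seq, runIdx_zero, runValue_zero]

theorem boundary_zero : boundary m n 0 = 0 := sum_range_zero _

theorem boundary_succ (k : ℕ) : boundary m n (k + 1) = boundary m n k + seq m n k :=
  sum_range_succ _ _

variable {m n} (hm : 0 < m) (hn : 0 < n)
include hm hn

theorem seq_pos (i : ℕ) : 0 < seq m n i := by
  rcases seq_mem m n i with h | h <;> omega

theorem boundary_strictMono : StrictMono (boundary m n) :=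
  strictMono_nat_of_lt_succ fun k => by
    have := seq_pos hm hn k
    rw [boundary_succ]
    omega

theorem boundary_runIdx_le_and_lt (i : ℕ) :
    boundary m n (runIdx m n i) ≤ i ∧ i < boundary m n (runIdx m n i + 1) := by
  induction i with
  | zero =>
    have := seq_pos hm hn 0
    simp [runIdx_zero, boundary_zero, boundary_succ, this]
  | succ i ih =>
    have := seq_pos hm hn (runIdx m n i + 1)
    rw [runIdx_succ]
    split
    · rw [boundary_succ m n (runIdx m n i + 1)]
      omega
    · omega

theorem runIdx_eq {k i : ℕ} (h₁ : boundary m n k ≤ i) (h₂ : i < boundary m n (k + 1)) :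
    runIdx m n i = k := by
  have hb := boundary_strictMono hm hn
  have hi := boundary_runIdx_le_and_lt hm hn i
  have := hb.lt_iff_lt.mp (hi.1.trans_lt h₂)
  have := hb.lt_iff_lt.mp (h₁.trans_lt hi.2)
  omega

theorem runIdx_boundary (k : ℕ) : runIdx m n (boundary m n k) = k :=
  runIdx_eq hm hn le_rfl (boundary_strictMono hm hn (lt_add_one k))

theorem infRunLengthsIs_seq (hmn : m ≠ n) : InfRunLengthsIs (seq m n) (seq m n) := by
  refine infRunLengthsIs_iff.mpr ⟨seq_pos hm hn, fun k i h₁ h₂ => ?_, fun k => ?_⟩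
  · change runValue m n (runIdx m n i) = runValue m n (runIdx m n (boundary m n k))
    rw [runIdx_eq hm hn h₁ h₂, runIdx_boundary hm hn]
  · change runValue m n (runIdx m n (boundary m n (k + 1))) ≠
      runValue m n (runIdx m n (boundary m n k))
    rw [runIdx_boundary hm hn, runIdx_boundary hm hn]
    exact runValue_succ_ne hmn k

theorem eq_seq {K : ℕ → ℕ} (hK : ∀ i, K i = m ∨ K i = n) (h0 : K 0 = m)
    (hself : InfRunLengthsIs K K) : K = seq m n := by
  obtain ⟨-, hconst, halt⟩ := infRunLengthsIs_iff.mp hself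
  have hstart := apply_eq_runValue (b := fun k => ∑ j ∈ range k, K j) hK (by simpa using h0) halt
  funext i
  induction i using Nat.strong_induction_on with
  | _ i ih =>
    obtain ⟨hi₁, hi₂⟩ := boundary_runIdx_le_and_lt hm hn i
    have hc := runIdx_le m n i
    set c := runIdx m n i
    have hsum : ∀ k ≤ i, ∑ j ∈ range k, K j = boundary m n k := fun k hk =>
      sum_congr rfl fun j hj => ih j (by rw [mem_range] at hj; omega)
    have hlt : i < ∑ j ∈ range (c + 1), K j := by
      rcases hc.lt_or_eq with hlt | heq
      · rwa [hsum _ hlt]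
      · -- `K c` is the unknown `K i` itself here, but only its positivity is needed
        have hKc : 0 < K c := by rcases hK c with h | h <;> omega
        have : c ≤ boundary m n c := (boundary_strictMono hm hn).id_le c
        rw [sum_range_succ, hsum c hc]
        omega
    rw [hconst c i (hsum c hc ▸ hi₁) hlt, hstart]
    rfl

end Kolakoski

/-- For any two distinct positive integers `m` and `n`, there exists a unique infinite
sequence `K` with values in `{m, n}` whose first term is `m` and which equals the sequence
of run-lengths of itself. -/
theorem exists_unique_kolakoski (m n : ℕ) (hm : 0 < m) (hn : 0 < n) (hmn : m ≠ n) :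
    ∃! K : ℕ → ℕ, (∀ i, K i = m ∨ K i = n) ∧ K 0 = m ∧ InfRunLengthsIs K K :=
  ⟨Kolakoski.seq m n,
    ⟨Kolakoski.seq_mem m n, Kolakoski.seq_zero m n, Kolakoski.infRunLengthsIs_seq hm hn hmn⟩,
    fun _ ⟨hK, h0, hself⟩ => Kolakoski.eq_seq hm hn hK h0 hself⟩
end

section
/- Let m and n be distinct positive integers and let t be a nonempty (finite or infinite) sequence of positive integers. Then there exist exactly two sequences s with values in {m, n} such that R(s) = t: one with first term m and one with first term n, and these two sequences are complements of each other (they have the same length and corresponding terms sum to m + n). -/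
/-!
Over a two-letter alphabet `{x, y}` consecutive runs alternate between `x` and `y`, so a
sequence is determined by its first term together with its run lengths: it is the
concatenation of alternating blocks `x^{t₀} y^{t₁} x^{t₂} …`. Conversely, for positive
`tᵢ` and `x ≠ y` these alternating blocks have run lengths exactly `t`, and exchanging
`x` and `y` turns the sequence starting with `x` into the one starting with `y`.
-/

/-- Auxiliary function for computing run-lengths of a finite sequence:
`a` is the value of the current run and `cnt` its length so far. -/
def runLengthsAux (a cnt : ℕ) : List ℕ → List ℕ
  | [] => [cnt]
  | b :: l => if b = a then runLengthsAux a (cnt + 1) l else cnt :: runLengthsAux b 1 l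

/-- `runLengths s` : the sequence of run-lengths of the finite sequence `s`,
i.e. the lengths of the maximal blocks of consecutive equal terms of `s`, in order. -/
def runLengths : List ℕ → List ℕ
  | [] => []
  | a :: l => runLengthsAux a 1 l

def alternatingBlocks (x y : ℕ) : List ℕ → List ℕ
  | [] => []
  | c :: t => List.replicate c x ++ alternatingBlocks y x t

section alternatingBlocks

variable {x y : ℕ}

theorem mem_alternatingBlocks {z : ℕ} {t : List ℕ} (h : z ∈ alternatingBlocks x y t) :
    z = x ∨ z = y := by
  induction t generalizing x y with
  | nil => simp [alternatingBlocks] at h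
  | cons c t ih =>
    rcases List.mem_append.mp h with h | h
    · exact Or.inl (List.eq_of_mem_replicate h)
    · exact (ih h).symm

theorem length_alternatingBlocks (t : List ℕ) : (alternatingBlocks x y t).length = t.sum := by
  induction t generalizing x y with
  | nil => rfl
  | cons c t ih => simp [alternatingBlocks, ih]

theorem headD_alternatingBlocks {c : ℕ} (hc : 0 < c) (t : List ℕ) (d : ℕ) :
    (alternatingBlocks x y (c :: t)).headD d = x := by
  obtain ⟨c, rfl⟩ := Nat.exists_eq_add_one.mpr hc
  rfl

theorem map_alternatingBlocks (f : ℕ → ℕ) (hx : f x = y) (hy : f y = x) (t : List ℕ) :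
    (alternatingBlocks x y t).map f = alternatingBlocks y x t := by
  induction t generalizing x y with
  | nil => rfl
  | cons c t ih =>
    simp only [alternatingBlocks, List.map_append, List.map_replicate, hx, ih hy hx]

theorem getD_alternatingBlocks_add_getD_swap {t : List ℕ} {i : ℕ}
    (hi : i < (alternatingBlocks x y t).length) :
    (alternatingBlocks x y t).getD i 0 + (alternatingBlocks y x t).getD i 0 = x + y := by
  rw [← map_alternatingBlocks (x := x) (y := y) (fun a => x + y - a) (by omega) (by omega) t,
    List.getD_eq_getElem _ _ hi, List.getD_eq_getElem _ _ (by simpa using hi),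
    List.getElem_map]
  rcases mem_alternatingBlocks (List.getElem_mem hi) with h | h <;> omega

end alternatingBlocks

theorem runLengthsAux_replicate_append (a cnt k : ℕ) (l : List ℕ) :
    runLengthsAux a cnt (List.replicate k a ++ l) = runLengthsAux a (cnt + k) l := by
  induction k generalizing cnt with
  | zero => rfl
  | succ k ih =>
    rw [List.replicate_succ, List.cons_append, runLengthsAux, if_pos rfl, ih]
    congr 1
    omega

theorem runLengthsAux_replicate_append_alternatingBlocks :
    ∀ {a b : ℕ} {t : List ℕ}, a ≠ b → (∀ c ∈ t, 0 < c) → ∀ cnt k : ℕ,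
      runLengthsAux a cnt (List.replicate k a ++ alternatingBlocks b a t) = (cnt + k) :: t
  | a, b, [], _, _, cnt, k => by
    rw [alternatingBlocks, List.append_nil, ← List.append_nil (List.replicate k a),
      runLengthsAux_replicate_append]
    rfl
  | a, b, c :: t, hab, ht, cnt, k => by
    obtain ⟨c, rfl⟩ := Nat.exists_eq_add_one.mpr (ht _ List.mem_cons_self)
    rw [alternatingBlocks, runLengthsAux_replicate_append, List.replicate_succ,
      List.cons_append, runLengthsAux, if_neg hab.symm,
      runLengthsAux_replicate_append_alternatingBlocks hab.symm
        (fun c hc => ht c (List.mem_cons_of_mem _ hc)), Nat.add_comm 1 c]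

theorem runLengths_alternatingBlocks {x y : ℕ} (hxy : x ≠ y) :
    ∀ {t : List ℕ}, (∀ c ∈ t, 0 < c) → runLengths (alternatingBlocks x y t) = t
  | [], _ => rfl
  | c :: t, ht => by
    obtain ⟨c, rfl⟩ := Nat.exists_eq_add_one.mpr (ht _ List.mem_cons_self)
    rw [alternatingBlocks, List.replicate_succ, List.cons_append, runLengths,
      runLengthsAux_replicate_append_alternatingBlocks hxy
        (fun c hc => ht c (List.mem_cons_of_mem _ hc)), Nat.add_comm 1 c]

/-- Stated with a pending run `a^cnt` in front, so that the induction follows `runLengthsAux`. -/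
theorem replicate_append_eq_alternatingBlocks :
    ∀ {a b : ℕ} {l : List ℕ}, (∀ z ∈ l, z = a ∨ z = b) → ∀ cnt : ℕ,
      List.replicate cnt a ++ l = alternatingBlocks a b (runLengthsAux a cnt l)
  | _, _, [], _, _ => by simp [runLengthsAux, alternatingBlocks]
  | a, b, z :: l, hl, cnt => by
    have hl' : ∀ w ∈ l, w = a ∨ w = b := fun w hw => hl w (List.mem_cons_of_mem _ hw)
    rw [runLengthsAux]
    split_ifs with hz
    · rw [← replicate_append_eq_alternatingBlocks hl', hz, List.replicate_succ',
        List.append_assoc, List.singleton_append]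
    · obtain rfl : z = b := (hl z List.mem_cons_self).resolve_left hz
      rw [alternatingBlocks, ← replicate_append_eq_alternatingBlocks
        (fun w hw => (hl' w hw).symm), List.replicate_one, List.singleton_append]

theorem eq_alternatingBlocks_runLengths {a b : ℕ} {l : List ℕ}
    (hl : ∀ z ∈ a :: l, z = a ∨ z = b) :
    a :: l = alternatingBlocks a b (runLengths (a :: l)) :=
  replicate_append_eq_alternatingBlocks (fun z hz => hl z (List.mem_cons_of_mem _ hz)) 1

open Finset

/-- For strictly increasing `b` with `b 0 = 0`, the `k` with `b k ≤ i < b (k + 1)`. -/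
def blockIndex (b : ℕ → ℕ) (i : ℕ) : ℕ := Nat.findGreatest (fun k => b k ≤ i) i

section blockIndex

variable {b : ℕ → ℕ}

theorem blockIndex_eq (hb : StrictMono b) {i k : ℕ} (h₁ : b k ≤ i) (h₂ : i < b (k + 1)) :
    blockIndex b i = k :=
  Nat.findGreatest_eq_iff.mpr ⟨(hb.id_le k).trans h₁, fun _ => h₁,
    fun _ hkn _ hn => h₂.not_ge ((hb.monotone hkn).trans hn)⟩

theorem blockIndex_mem_block (hb : StrictMono b) (hb0 : b 0 = 0) (i : ℕ) :
    b (blockIndex b i) ≤ i ∧ i < b (blockIndex b i + 1) := by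
  have hle : b (blockIndex b i) ≤ i :=
    Nat.findGreatest_spec (P := fun k => b k ≤ i) (Nat.zero_le i) (by simp [hb0])
  refine ⟨hle, lt_of_not_ge fun hlt => ?_⟩
  have hsucc : blockIndex b i + 1 ≤ i := (hb.id_le _).trans hlt
  exact (Nat.lt_succ_self _).not_ge (Nat.le_findGreatest hsucc hlt)

end blockIndex

/-- The infinite word `x^{t₀} y^{t₁} x^{t₂} …`. -/
def alternatingSeq (x y : ℕ) (t : ℕ → ℕ) (i : ℕ) : ℕ :=
  if Even (blockIndex (fun k => ∑ j ∈ range k, t j) i) then x else y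

section alternatingSeq

variable {x y : ℕ} {t : ℕ → ℕ}

theorem alternatingSeq_eq_or (i : ℕ) :
    alternatingSeq x y t i = x ∨ alternatingSeq x y t i = y := by
  unfold alternatingSeq
  split_ifs <;> simp

theorem alternatingSeq_zero : alternatingSeq x y t 0 = x := by
  simp [alternatingSeq, blockIndex]

theorem alternatingSeq_add_swap (i : ℕ) :
    alternatingSeq x y t i + alternatingSeq y x t i = x + y := by
  unfold alternatingSeq
  split_ifs
  · rfl
  · exact add_comm y x

theorem strictMono_partialSums (ht : ∀ i, 0 < t i) :
    StrictMono fun k => ∑ j ∈ range k, t j :=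
  strictMono_nat_of_lt_succ fun k => by simpa [sum_range_succ] using ht k

theorem alternatingSeq_partialSums (ht : ∀ i, 0 < t i) (k : ℕ) :
    alternatingSeq x y t (∑ j ∈ range k, t j) = if Even k then x else y := by
  have hb := strictMono_partialSums ht
  rw [alternatingSeq, blockIndex_eq hb le_rfl (hb k.lt_succ_self)]

theorem infRunLengthsIs_alternatingSeq (hxy : x ≠ y) (ht : ∀ i, 0 < t i) :
    InfRunLengthsIs (alternatingSeq x y t) t := by
  have hb := strictMono_partialSums ht
  refine ⟨fun k => ∑ j ∈ range k, t j, sum_range_zero t, hb, fun k i h₁ h₂ => ?_,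
    fun k => ?_, fun k => by simp only [sum_range_succ, Nat.add_sub_cancel_left]⟩
  · rw [alternatingSeq, alternatingSeq, blockIndex_eq hb h₁ h₂,
      blockIndex_eq hb le_rfl (hb k.lt_succ_self)]
  · simp only [alternatingSeq_partialSums ht, Nat.even_add_one]
    split_ifs <;> simp [hxy, hxy.symm]

theorem eq_alternatingSeq {s : ℕ → ℕ} (hs : ∀ i, s i = x ∨ s i = y)
    (hst : InfRunLengthsIs s t) (h0 : s 0 = x) : s = alternatingSeq x y t := by
  obtain ⟨b, hb0, hb, hconst, hne, hr⟩ := hst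
  have hb_eq : b = fun k => ∑ j ∈ range k, t j := by
    funext k
    simp only [hr]
    rw [sum_range_tsub hb.monotone, hb0, tsub_zero]
  subst hb_eq
  beta_reduce at *
  -- Consecutive block starts carry different letters of `{x, y}`, so the letters alternate.
  have hstart : ∀ k, s (∑ j ∈ range k, t j) = if Even k then x else y := by
    intro k
    induction k with
    | zero => simpa using h0
    | succ k ih =>
      have hk := hne k
      rw [ih] at hk
      rcases hs (∑ j ∈ range (k + 1), t j) with h | h <;>
        by_cases he : Even k <;> simp [h, he, Nat.even_add_one] at hk ⊢
  funext i
  obtain ⟨h₁, h₂⟩ := blockIndex_mem_block hb hb0 i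
  rw [hconst _ i h₁ h₂, hstart, alternatingSeq]

end alternatingSeq

theorem two_preimages_of_runLengths_general (m n : ℕ) (hmn : m ≠ n) :
    -- finite case
    (∀ t : List ℕ, t ≠ [] → (∀ a ∈ t, 0 < a) →
      ∃ s₁ s₂ : List ℕ,
        (∀ a ∈ s₁, a = m ∨ a = n) ∧ runLengths s₁ = t ∧ s₁.headD 0 = m ∧
        (∀ a ∈ s₂, a = m ∨ a = n) ∧ runLengths s₂ = t ∧ s₂.headD 0 = n ∧
        s₁.length = s₂.length ∧
        (∀ i < s₁.length, s₁.getD i 0 + s₂.getD i 0 = m + n) ∧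
        (∀ s : List ℕ, (∀ a ∈ s, a = m ∨ a = n) → runLengths s = t → s = s₁ ∨ s = s₂)) ∧
    -- infinite case
    (∀ t : ℕ → ℕ, (∀ i, 0 < t i) →
      ∃ s₁ s₂ : ℕ → ℕ,
        (∀ i, s₁ i = m ∨ s₁ i = n) ∧ InfRunLengthsIs s₁ t ∧ s₁ 0 = m ∧
        (∀ i, s₂ i = m ∨ s₂ i = n) ∧ InfRunLengthsIs s₂ t ∧ s₂ 0 = n ∧
        (∀ i, s₁ i + s₂ i = m + n) ∧
        (∀ s : ℕ → ℕ, (∀ i, s i = m ∨ s i = n) → InfRunLengthsIs s t → s = s₁ ∨ s = s₂)) := by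
  refine ⟨fun t ht0 ht => ?_, fun t ht => ?_⟩
  · obtain ⟨c, t', rfl⟩ := List.exists_cons_of_ne_nil ht0
    refine ⟨alternatingBlocks m n (c :: t'), alternatingBlocks n m (c :: t'),
      fun a => mem_alternatingBlocks, runLengths_alternatingBlocks hmn ht,
      headD_alternatingBlocks (ht c List.mem_cons_self) t' 0,
      fun a ha => (mem_alternatingBlocks ha).symm, runLengths_alternatingBlocks hmn.symm ht,
      headD_alternatingBlocks (ht c List.mem_cons_self) t' 0,
      by rw [length_alternatingBlocks, length_alternatingBlocks],
      fun i => getD_alternatingBlocks_add_getD_swap, ?_⟩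
    rintro (_ | ⟨a, l⟩) hs hst
    · exact (ht0 hst.symm).elim
    · rw [← hst]
      rcases hs a List.mem_cons_self with rfl | rfl
      · exact Or.inl (eq_alternatingBlocks_runLengths hs)
      · exact Or.inr (eq_alternatingBlocks_runLengths fun z hz => (hs z hz).symm)
  · refine ⟨alternatingSeq m n t, alternatingSeq n m t, alternatingSeq_eq_or,
      infRunLengthsIs_alternatingSeq hmn ht, alternatingSeq_zero,
      fun i => (alternatingSeq_eq_or i).symm, infRunLengthsIs_alternatingSeq hmn.symm ht,
      alternatingSeq_zero, alternatingSeq_add_swap, fun s hs hst => ?_⟩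
    rcases hs 0 with h0 | h0
    · exact Or.inl (eq_alternatingSeq hs hst h0)
    · exact Or.inr (eq_alternatingSeq (fun i => (hs i).symm) hst h0)

/-- Let `m ≠ n` be positive integers and `t` a nonempty (finite or infinite) sequence of
positive integers.  There are exactly two sequences `s` with values in `{m, n}` such that
`R(s) = t`: one with first term `m` and one with first term `n`, and they are complements
of each other (same length, corresponding terms summing to `m + n`). -/
theorem two_preimages_of_runLengths (m n : ℕ) (hm : 0 < m) (hn : 0 < n) (hmn : m ≠ n) :
    -- finite case
    (∀ t : List ℕ, t ≠ [] → (∀ a ∈ t, 0 < a) →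
      ∃ s₁ s₂ : List ℕ,
        (∀ a ∈ s₁, a = m ∨ a = n) ∧ runLengths s₁ = t ∧ s₁.headD 0 = m ∧
        (∀ a ∈ s₂, a = m ∨ a = n) ∧ runLengths s₂ = t ∧ s₂.headD 0 = n ∧
        s₁.length = s₂.length ∧
        (∀ i < s₁.length, s₁.getD i 0 + s₂.getD i 0 = m + n) ∧
        (∀ s : List ℕ, (∀ a ∈ s, a = m ∨ a = n) → runLengths s = t → s = s₁ ∨ s = s₂)) ∧
    -- infinite case
    (∀ t : ℕ → ℕ, (∀ i, 0 < t i) →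
      ∃ s₁ s₂ : ℕ → ℕ,
        (∀ i, s₁ i = m ∨ s₁ i = n) ∧ InfRunLengthsIs s₁ t ∧ s₁ 0 = m ∧
        (∀ i, s₂ i = m ∨ s₂ i = n) ∧ InfRunLengthsIs s₂ t ∧ s₂ 0 = n ∧
        (∀ i, s₁ i + s₂ i = m + n) ∧
        (∀ s : ℕ → ℕ, (∀ i, s i = m ∨ s i = n) → InfRunLengthsIs s t → s = s₁ ∨ s = s₂)) :=
  two_preimages_of_runLengths_general m n hmn
end

section
/- Let m and n be distinct positive integers, let t be a nonempty finite sequence with values in {m, n}, let s^(1) be a nonempty finite sequence of positive integers, and let s^(2) be a nonempty (finite or infinite) sequence of positive integers. Then E_{m,n}(s^(1) s^(2), t) = E_{m,n}(s^(1), t) E_{m,n}(s^(2), C_{m,n}(s^(1), t)), where juxtaposition denotes concatenation. -/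
/-- `expand1 m n x s` : the expansion `E_{m,n}(s, x)` of the finite sequence `s` with the
single starting point `x ∈ {m, n}`: the unique sequence with values in `{m, n}`, first term
`x`, and run-lengths `s`. -/
def expand1 (m n : ℕ) : ℕ → List ℕ → List ℕ
  | _, [] => []
  | x, a :: l => List.replicate a x ++ expand1 m n (m + n - x) l

/-- `expand m n s t` : the expansion `E_{m,n}(s, t)` of the finite sequence `s` with the
finite sequence of starting points `t` (values in `{m, n}`), defined by
`E_{m,n}(s, t₁ t') = E_{m,n}(E_{m,n}(s, t₁), t')`. -/
def expand (m n : ℕ) : List ℕ → List ℕ → List ℕ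
  | s, [] => s
  | s, x :: t => expand m n (expand1 m n x s) t

/-- `torsion m n s t` : the torsion `C_{m,n}(s, t)`, the sequence of the same length as `t`
whose `k`-th term equals `m + n` minus the last term of `E_{m,n}(s, t⁽ᵏ⁾)`, where `t⁽ᵏ⁾`
consists of the first `k` terms of `t`. -/
def torsion (m n : ℕ) (s t : List ℕ) : List ℕ :=
  (List.range t.length).map fun k => m + n - (expand m n s (t.take (k + 1))).getLastD 0

/-- `IsExpansionInf m n s t u` : the infinite sequence `u` is the expansion `E_{m,n}(s, t)`
of the infinite sequence `s` with starting points `t`, i.e. `R^{|t|}(u) = s`, and for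
`k = 0, …, |t| - 1`, `R^k(u)` has values in `{m, n}` and first term `t_{|t|-k}`
(1-indexed). -/
def IsExpansionInf (m n : ℕ) (s : ℕ → ℕ) (t : List ℕ) (u : ℕ → ℕ) : Prop :=
  ∃ v : ℕ → ℕ → ℕ, v 0 = u ∧ v t.length = s ∧
    (∀ k < t.length, InfRunLengthsIs (v k) (v (k + 1))) ∧
    (∀ k < t.length, (∀ i, v k i = m ∨ v k i = n) ∧ v k 0 = t.getD (t.length - 1 - k) 0)

/-- `appendInf l s` : the concatenation of the finite sequence `l` followed by the
infinite sequence `s`. -/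
def appendInf (l : List ℕ) (s : ℕ → ℕ) : ℕ → ℕ := fun i =>
  if h : i < l.length then l.get ⟨i, h⟩ else s (i - l.length)

/-! Expanding with a single starting point `x` is run-length decoding, which is compatible with
concatenation: `E(s₁ s₂, x) = E(s₁, x) E(s₂, x')`, where `x'` is the letter of `{m, n}` other than
the last letter of `E(s₁, x)`. Iterating this over the levels of `E(·, t)`, the starting points
of the `s₂`-part are exactly the torsion `C(s₁, t)`. For infinite `s₂` the same decomposition is
read off the block structure of each level, peeling off one block of `s₁` at a time. -/

namespace List

variable {α : Type*}

theorem getLastD_append (l₁ l₂ : List α) (d : α) :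
    (l₁ ++ l₂).getLastD d = l₂.getLastD (l₁.getLastD d) := by
  simp only [getLastD_eq_getLast?, getLast?_append]
  cases l₂.getLast? <;> simp

theorem getLastD_replicate {k : ℕ} (hk : k ≠ 0) (x d : α) : (replicate k x).getLastD d = x := by
  simp [getLastD_eq_getLast?, getLast?_replicate, hk]

theorem getLastD_eq_getLastD_of_ne_nil {l : List α} (h : l ≠ []) (d d' : α) :
    l.getLastD d = l.getLastD d' := by
  simp [getLastD_eq_getLast?, getLast?_eq_some_getLast h]

end List

open List

section Finite

variable {m n : ℕ}

theorem mem_expand1 {x : ℕ} (hx : x = m ∨ x = n) {s : List ℕ} {a : ℕ}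
    (ha : a ∈ expand1 m n x s) : a = m ∨ a = n := by
  induction s generalizing x with
  | nil => simp [expand1] at ha
  | cons b l ih =>
    simp only [expand1, mem_append, mem_replicate] at ha
    rcases ha with ⟨-, rfl⟩ | ha
    · exact hx
    · exact ih (by omega) ha

theorem pos_of_mem_expand1 (hm : 0 < m) (hn : 0 < n) {x : ℕ} (hx : x = m ∨ x = n)
    {s : List ℕ} {a : ℕ} (ha : a ∈ expand1 m n x s) : 0 < a := by
  rcases mem_expand1 hx ha with rfl | rfl <;> assumption

theorem expand1_ne_nil (x : ℕ) {s : List ℕ} (hs : s ≠ []) (hpos : ∀ a ∈ s, 0 < a) :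
    expand1 m n x s ≠ [] := by
  obtain ⟨a, l, rfl⟩ := exists_cons_of_ne_nil hs
  have := hpos a mem_cons_self
  simp only [expand1, ne_eq, append_eq_nil_iff, replicate_eq_nil_iff]
  omega

/- The default `m + n - x` of `getLastD` makes the identity hold for empty `s₁` too. -/
theorem expand1_append {x : ℕ} (hx : x ≤ m + n) {s₁ : List ℕ} (hs₁ : ∀ a ∈ s₁, 0 < a)
    (s₂ : List ℕ) :
    expand1 m n x (s₁ ++ s₂) =
      expand1 m n x s₁ ++ expand1 m n (m + n - (expand1 m n x s₁).getLastD (m + n - x)) s₂ := by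
  induction s₁ generalizing x with
  | nil => simp [expand1, Nat.sub_sub_self hx]
  | cons a l ih =>
    rw [cons_append, expand1, expand1, ih (Nat.sub_le _ _) fun b hb => hs₁ b (mem_cons_of_mem a hb),
      append_assoc, getLastD_append, getLastD_replicate (hs₁ a mem_cons_self).ne',
      Nat.sub_sub_self hx]

theorem torsion_cons (s : List ℕ) (x : ℕ) (t : List ℕ) :
    torsion m n s (x :: t) =
      (m + n - (expand1 m n x s).getLastD 0) :: torsion m n (expand1 m n x s) t := by
  simp only [torsion, length_cons, range_succ_eq_map, map_cons, map_map]
  rfl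

theorem expand_append (hm : 0 < m) (hn : 0 < n) {t : List ℕ} (ht : ∀ a ∈ t, a = m ∨ a = n)
    {s₁ : List ℕ} (hs₁ : s₁ ≠ []) (hs₁p : ∀ a ∈ s₁, 0 < a) (s₂ : List ℕ) :
    expand m n (s₁ ++ s₂) t = expand m n s₁ t ++ expand m n s₂ (torsion m n s₁ t) := by
  induction t generalizing s₁ s₂ with
  | nil => rfl
  | cons x t ih =>
    have hx := ht x mem_cons_self
    have he := expand1_ne_nil (m := m) (n := n) x hs₁ hs₁p
    rw [expand, expand1_append (by omega) hs₁p, getLastD_eq_getLastD_of_ne_nil he _ 0,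
      ih (fun a ha => ht a (mem_cons_of_mem x ha)) he (fun a => pos_of_mem_expand1 hm hn hx),
      torsion_cons]
    rfl

end Finite

namespace InfRunLengthsIs

variable {u r : ℕ → ℕ}

theorem pos (h : InfRunLengthsIs u r) (k : ℕ) : 0 < r k := by
  obtain ⟨b, -, hmono, -, -, hlen⟩ := h
  have := hmono (Nat.lt_add_one k)
  rw [hlen]
  omega

theorem eq_of_lt (h : InfRunLengthsIs u r) {i : ℕ} (hi : i < r 0) : u i = u 0 := by
  obtain ⟨b, hb0, -, hconst, -, hlen⟩ := h
  rw [hlen, hb0] at hi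
  simpa [hb0] using hconst 0 i (by omega) (by simpa using hi)

theorem ne (h : InfRunLengthsIs u r) : u (r 0) ≠ u 0 := by
  obtain ⟨b, hb0, -, -, hne, hlen⟩ := h
  simpa [hlen, hb0] using hne 0

theorem shift (h : InfRunLengthsIs u r) :
    InfRunLengthsIs (fun i => u (r 0 + i)) (fun k => r (k + 1)) := by
  obtain ⟨b, hb0, hmono, hconst, hne, hlen⟩ := h
  have hr0 : r 0 = b 1 := by simp [hlen, hb0]
  have hle : ∀ k, b 1 ≤ b (k + 1) := fun k => hmono.monotone (by omega)
  refine ⟨fun k => b (k + 1) - r 0, by simp [hr0], ?_, ?_, ?_, ?_⟩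
  · intro k k' hk
    have := hmono (show k + 1 < k' + 1 by omega)
    have := hle k
    dsimp only
    omega
  · intro k i hki hki'
    have := hle k
    have := hle (k + 1)
    dsimp only at hki hki' ⊢
    rw [hconst (k + 1) (r 0 + i) (by omega) (by omega)]
    congr 1
    omega
  · intro k
    have := hle k
    have := hle (k + 1)
    dsimp only
    rw [show r 0 + (b (k + 1 + 1) - r 0) = b (k + 1 + 1) by omega,
      show r 0 + (b (k + 1) - r 0) = b (k + 1) by omega]
    exact hne (k + 1)
  · intro k
    have := hle k
    have := hle (k + 1)
    dsimp only
    rw [hlen]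
    omega

end InfRunLengthsIs

theorem appendInf_nil (s : ℕ → ℕ) : appendInf [] s = s := by
  funext i
  simp [appendInf]

theorem appendInf_cons_zero (a : ℕ) (l : List ℕ) (s : ℕ → ℕ) : appendInf (a :: l) s 0 = a := by
  simp [appendInf]

theorem appendInf_cons_succ (a : ℕ) (l : List ℕ) (s : ℕ → ℕ) (k : ℕ) :
    appendInf (a :: l) s (k + 1) = appendInf l s k := by
  by_cases h : k < l.length <;> simp [appendInf, h]

theorem appendInf_append (l₁ l₂ : List ℕ) (s : ℕ → ℕ) :
    appendInf (l₁ ++ l₂) s = appendInf l₁ (appendInf l₂ s) := by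
  induction l₁ with
  | nil => rw [nil_append, appendInf_nil]
  | cons a l₁ ih =>
    funext i
    cases i with
    | zero => rw [cons_append, appendInf_cons_zero, appendInf_cons_zero]
    | succ k => rw [cons_append, appendInf_cons_succ, appendInf_cons_succ, ih]

theorem eq_appendInf_replicate {u : ℕ → ℕ} {k c : ℕ} (h : ∀ i < k, u i = c) :
    u = appendInf (replicate k c) (fun i => u (k + i)) := by
  funext i
  by_cases hi : i < k
  · simp [appendInf, hi, h i hi]
  · simp only [appendInf, length_replicate, hi, dite_false]
    congr 1
    omega

section Infinite

variable {m n : ℕ}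

theorem InfRunLengthsIs.exists_eq_appendInf_expand1 {s₁ : List ℕ} {s₂ u : ℕ → ℕ}
    (hu : ∀ i, u i = m ∨ u i = n) (h : InfRunLengthsIs u (appendInf s₁ s₂)) :
    ∃ w, u = appendInf (expand1 m n (u 0) s₁) w ∧ InfRunLengthsIs w s₂ ∧
      (∀ i, w i = m ∨ w i = n) ∧
      w 0 = m + n - (expand1 m n (u 0) s₁).getLastD (m + n - u 0) := by
  induction s₁ generalizing u with
  | nil =>
    rw [appendInf_nil] at h
    refine ⟨u, by rw [expand1, appendInf_nil], h, hu, ?_⟩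
    rcases hu 0 with h0 | h0 <;> simp only [expand1, getLastD_nil] <;> omega
  | cons a l ih =>
    have ha : appendInf (a :: l) s₂ 0 = a := appendInf_cons_zero a l s₂
    have hshift := h.shift
    simp only [ha, appendInf_cons_succ] at hshift
    have hua : u (a + 0) = m + n - u 0 := by
      have := h.ne
      rw [ha] at this
      rcases hu a with h1 | h1 <;> rcases hu 0 with h2 | h2 <;> simp only [add_zero] <;> omega
    obtain ⟨w, hu', hw, hwv, hw0⟩ := ih (fun i => hu (a + i)) hshift
    rw [hua] at hu' hw0
    refine ⟨w, ?_, hw, hwv, ?_⟩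
    · calc u = appendInf (replicate a (u 0)) (fun i => u (a + i)) :=
            eq_appendInf_replicate fun i hi => h.eq_of_lt (ha ▸ hi)
        _ = appendInf (expand1 m n (u 0) (a :: l)) w := by rw [hu', expand1, appendInf_append]
    · have ha0 : a ≠ 0 := (ha ▸ h.pos 0).ne'
      rw [hw0, expand1, getLastD_append, getLastD_replicate ha0,
        Nat.sub_sub_self (by rcases hu 0 with h0 | h0 <;> omega)]

theorem isExpansionInf_nil_iff {s u : ℕ → ℕ} : IsExpansionInf m n s [] u ↔ u = s := by
  constructor
  · rintro ⟨v, h0, hL, -, -⟩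
    exact h0 ▸ hL
  · rintro rfl
    exact ⟨fun _ => u, rfl, rfl, nofun, nofun⟩

theorem isExpansionInf_cons_iff {s u : ℕ → ℕ} {x : ℕ} {t : List ℕ} :
    IsExpansionInf m n s (x :: t) u ↔ ∃ s', InfRunLengthsIs s' s ∧
      (∀ i, s' i = m ∨ s' i = n) ∧ s' 0 = x ∧ IsExpansionInf m n s' t u := by
  constructor
  · rintro ⟨v, h0, hL, hrun, hval⟩
    simp only [length_cons] at hL hrun hval
    have htop := hval t.length (Nat.lt_add_one _)
    refine ⟨v t.length, hL ▸ hrun _ (Nat.lt_add_one _), htop.1, by simpa using htop.2,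
      v, h0, rfl, fun k hk => hrun k (by omega), fun k hk => ⟨(hval k (by omega)).1, ?_⟩⟩
    rw [(hval k (by omega)).2, show t.length + 1 - 1 - k = t.length - 1 - k + 1 by omega,
      getD_cons_succ]
  · rintro ⟨s', hrun', hs'v, rfl, v, h0, hL, hrun, hval⟩
    refine ⟨Function.update v (t.length + 1) s, by simpa using h0, by simp, ?_, ?_⟩
    · intro k hk
      simp only [length_cons] at hk
      rw [Function.update_of_ne (by omega)]
      rcases (Nat.lt_add_one_iff_lt_or_eq.1 hk) with hk | rfl
      · rw [Function.update_of_ne (by omega)]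
        exact hrun k hk
      · rw [Function.update_self, hL]
        exact hrun'
    · intro k hk
      simp only [length_cons] at hk
      rw [Function.update_of_ne (by omega)]
      rcases (Nat.lt_add_one_iff_lt_or_eq.1 hk) with hk | rfl
      · rw [(hval k hk).2, length_cons, show t.length + 1 - 1 - k = t.length - 1 - k + 1 by omega,
          getD_cons_succ]
        exact ⟨(hval k hk).1, rfl⟩
      · simpa [hL] using hs'v

theorem exists_isExpansionInf_appendInf (hm : 0 < m) (hn : 0 < n) {t : List ℕ}
    (ht : ∀ a ∈ t, a = m ∨ a = n) {s₁ : List ℕ} (hs₁ : s₁ ≠ []) (hs₁p : ∀ a ∈ s₁, 0 < a)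
    {s₂ u : ℕ → ℕ} (hu : IsExpansionInf m n (appendInf s₁ s₂) t u) :
    ∃ w, IsExpansionInf m n s₂ (torsion m n s₁ t) w ∧ u = appendInf (expand m n s₁ t) w := by
  induction t generalizing s₁ s₂ with
  | nil =>
    rw [isExpansionInf_nil_iff] at hu
    exact ⟨s₂, isExpansionInf_nil_iff.2 rfl, hu⟩
  | cons x t ih =>
    have hx := ht x mem_cons_self
    have he := expand1_ne_nil (m := m) (n := n) x hs₁ hs₁p
    obtain ⟨s', hrun, hs'v, rfl, hexp⟩ := isExpansionInf_cons_iff.1 hu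
    obtain ⟨w₂, hs', hw₂, hw₂v, hw₂0⟩ := hrun.exists_eq_appendInf_expand1 hs'v
    rw [hs'] at hexp
    obtain ⟨w, hw, rfl⟩ := ih (fun a ha => ht a (mem_cons_of_mem _ ha)) he
      (fun a => pos_of_mem_expand1 hm hn hx) hexp
    refine ⟨w, ?_, rfl⟩
    rw [torsion_cons, getLastD_eq_getLastD_of_ne_nil he 0 (m + n - s' 0)]
    exact isExpansionInf_cons_iff.2 ⟨w₂, hw₂, hw₂v, hw₂0, hw⟩

end Infinite

theorem expand_append_left_general (m n : ℕ) (hm : 0 < m) (hn : 0 < n)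
    (t : List ℕ) (htv : ∀ a ∈ t, a = m ∨ a = n)
    (s₁ : List ℕ) (hs₁ : s₁ ≠ []) (hs₁p : ∀ a ∈ s₁, 0 < a) :
    -- `s₂` finite
    (∀ s₂ : List ℕ, s₂ ≠ [] → (∀ a ∈ s₂, 0 < a) →
      expand m n (s₁ ++ s₂) t = expand m n s₁ t ++ expand m n s₂ (torsion m n s₁ t)) ∧
    -- `s₂` infinite
    (∀ s₂ : ℕ → ℕ, (∀ i, 0 < s₂ i) →
      ∀ u : ℕ → ℕ, IsExpansionInf m n (appendInf s₁ s₂) t u →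
        ∃ w : ℕ → ℕ, IsExpansionInf m n s₂ (torsion m n s₁ t) w ∧
          u = appendInf (expand m n s₁ t) w) :=
  ⟨fun s₂ _ _ => expand_append hm hn htv hs₁ hs₁p s₂,
    fun _ _ _ hu => exists_isExpansionInf_appendInf hm hn htv hs₁ hs₁p hu⟩

/-- Let `m ≠ n` be positive, `t` a nonempty finite sequence with values in `{m, n}`,
`s₁` a nonempty finite sequence of positive integers, and `s₂` a nonempty (finite or
infinite) sequence of positive integers.  Then
`E_{m,n}(s₁ s₂, t) = E_{m,n}(s₁, t) E_{m,n}(s₂, C_{m,n}(s₁, t))`. -/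
theorem expand_append_left (m n : ℕ) (hm : 0 < m) (hn : 0 < n) (hmn : m ≠ n)
    (t : List ℕ) (ht : t ≠ []) (htv : ∀ a ∈ t, a = m ∨ a = n)
    (s₁ : List ℕ) (hs₁ : s₁ ≠ []) (hs₁p : ∀ a ∈ s₁, 0 < a) :
    -- `s₂` finite
    (∀ s₂ : List ℕ, s₂ ≠ [] → (∀ a ∈ s₂, 0 < a) →
      expand m n (s₁ ++ s₂) t = expand m n s₁ t ++ expand m n s₂ (torsion m n s₁ t)) ∧
    -- `s₂` infinite
    (∀ s₂ : ℕ → ℕ, (∀ i, 0 < s₂ i) →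
      ∀ u : ℕ → ℕ, IsExpansionInf m n (appendInf s₁ s₂) t u →
        ∃ w : ℕ → ℕ, IsExpansionInf m n s₂ (torsion m n s₁ t) w ∧
          u = appendInf (expand m n s₁ t) w) :=
  expand_append_left_general m n hm hn t htv s₁ hs₁ hs₁p
end

section
/- Let m and n be distinct positive integers, let s be a nonempty finite sequence of positive integers, and let t^(1), t^(2) be nonempty finite sequences with values in {m, n}. Then C_{m,n}(s, t^(1) t^(2)) = C_{m,n}(s, t^(1)) C_{m,n}(E_{m,n}(s, t^(1)), t^(2)), where juxtaposition denotes concatenation. -/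
theorem expand_append_s5 (m n : ℕ) (s t₁ t₂ : List ℕ) :
    expand m n s (t₁ ++ t₂) = expand m n (expand m n s t₁) t₂ := by
  induction t₁ generalizing s with
  | nil => rfl
  | cons x t ih => exact ih _

theorem torsion_append_right_general (m n : ℕ) (s : List ℕ) (t₁ t₂ : List ℕ) :
    torsion m n s (t₁ ++ t₂) = torsion m n s t₁ ++ torsion m n (expand m n s t₁) t₂ := by
  unfold torsion
  rw [List.length_append, List.range_add, List.map_append, List.map_map]
  congr 1
  · refine List.map_congr_left fun k hk => ?_
    rw [List.take_append_of_le_length (List.mem_range.mp hk)]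
  · refine List.map_congr_left fun k _ => ?_
    rw [Function.comp_apply, Nat.add_assoc, List.take_length_add_append, expand_append_s5]

/-- `C_{m,n}(s, t⁽¹⁾ t⁽²⁾) = C_{m,n}(s, t⁽¹⁾) C_{m,n}(E_{m,n}(s, t⁽¹⁾), t⁽²⁾)`. -/
theorem torsion_append_right (m n : ℕ) (hm : 0 < m) (hn : 0 < n) (hmn : m ≠ n)
    (s : List ℕ) (hs : s ≠ []) (hsp : ∀ a ∈ s, 0 < a)
    (t₁ t₂ : List ℕ) (ht₁ : t₁ ≠ []) (ht₂ : t₂ ≠ [])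
    (ht₁v : ∀ a ∈ t₁, a = m ∨ a = n) (ht₂v : ∀ a ∈ t₂, a = m ∨ a = n) :
    torsion m n s (t₁ ++ t₂) = torsion m n s t₁ ++ torsion m n (expand m n s t₁) t₂ :=
  torsion_append_right_general m n s t₁ t₂
end

section
/- Let m and n be distinct positive integers, let s be a nonempty finite sequence of positive integers, and let x ∈ {m, n}, regarded as a sequence of length 1. Then the last term of E_{m,n}(s, x) equals x if the length of s is odd, and equals m + n − x if the length of s is even. -/
lemma getLastD_replicate (x : ℕ) : ∀ b d, (List.replicate (b + 1) x).getLastD d = x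
  | 0, _ => rfl
  | b + 1, d => by
    rw [List.replicate_succ, List.getLastD_cons]
    exact getLastD_replicate x b x

lemma expand1_key (m n : ℕ) (s : List ℕ) (hs : s ≠ []) (hsp : ∀ a ∈ s, 0 < a) :
    ∀ x, x ≤ m + n →
    (Odd s.length → (expand1 m n x s).getLastD 0 = x) ∧
    (Even s.length → (expand1 m n x s).getLastD 0 = m + n - x) := by
  induction s with
  | nil => simp at hs
  | cons a l ih =>
    intro x hxle
    have ha : 0 < a := hsp a (by simp)
    rcases eq_or_ne l [] with rfl | hl
    · constructor
      · intro _
        obtain ⟨b, rfl⟩ := Nat.exists_eq_add_of_lt ha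
        simp only [expand1, List.append_nil]
        rw [show 0 + b + 1 = b + 1 by omega]
        exact getLastD_replicate x b 0
      · intro h; simp at h
    · have ihl := ih hl (fun a h => hsp a (by simp [h])) (m + n - x) (by omega)
      have hne : expand1 m n (m + n - x) l ≠ [] := by
        cases l with
        | nil => exact absurd rfl hl
        | cons b t =>
          have hb : 0 < b := hsp b (by simp)
          simp [expand1, List.replicate_eq_nil_iff]
          omega
      have hlast : (expand1 m n x (a :: l)).getLastD 0
          = (expand1 m n (m + n - x) l).getLastD 0 := by
        simp only [expand1, List.getLastD_eq_getLast?,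
          List.getLast?_append_of_ne_nil _ hne]
      rw [hlast]
      have hx2 : m + n - (m + n - x) = x := by omega
      constructor
      · intro h
        rw [List.length_cons, Nat.odd_add_one] at h
        rw [ihl.2 (Nat.not_odd_iff_even.1 h), hx2]
      · intro h
        rw [List.length_cons, Nat.even_add_one] at h
        exact ihl.1 (Nat.not_even_iff_odd.1 h)

/-- The last term of `E_{m,n}(s, x)` equals `x` if `|s|` is odd, and `m + n - x` if `|s|`
is even. -/
theorem expand_getLast (m n : ℕ) (hm : 0 < m) (hn : 0 < n) (hmn : m ≠ n)
    (s : List ℕ) (hs : s ≠ []) (hsp : ∀ a ∈ s, 0 < a)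
    (x : ℕ) (hx : x = m ∨ x = n) :
    (Odd s.length → (expand m n s [x]).getLastD 0 = x) ∧
    (Even s.length → (expand m n s [x]).getLastD 0 = m + n - x) := by
  have : expand m n s [x] = expand1 m n x s := rfl
  rw [this]
  exact expand1_key m n s hs hsp x (by rcases hx with rfl | rfl <;> omega)
end

section
/- Let j > 0 and let n and n' be positive even integers with n ≡ n' (mod 2^{j-1}). Then the orbit of the sequence 1^{2j-1} under the map t ↦ C_{1,n}(1, t) on {1, n}^{2j-1} has the same length as the orbit of the sequence 1^{2j-1} under the map t ↦ C_{1,n'}(1, t) on {1, n'}^{2j-1}. In particular, the orbit of 1^{2j-1} under C_{1,n}(1, −) has length 2^j if and only if the orbit of 1^{2j-1} under C_{1,n'}(1, −) has length 2^j. -/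
/-!
Encode the letters `1, n` as bits. Since the last term of `E_{1,n}(s, x)` is `x` or `1 + n - x`
according to the parity of `|s|`, the map `C_{1,n}(1, -)` flips the `k`-th bit of `t` exactly when
`|E_{1,n}(1, t⁽ᵏ⁻¹⁾)|` is odd. It therefore suffices that the parity of `|E_{1,n}(1, w)|` for a
word `w` of length `d` depends only on `n` mod `2 ^ ⌈d / 2⌉`.

This is proved by induction on `d` for the relation "equal length parities after expanding along
any word of at most `d` letters". Expanding `[x]` against a letter repeats that letter `x` times,
so the heart of the matter is repetition: related blocks `B`, `B'` repeated `a` and `a'` times stay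
related at depth `d` when `a ≡ a' [MOD 2 ^ (⌊d / 2⌋ + 1)]`, and already when
`a ≡ a' [MOD 2 ^ ⌈d / 2⌉]` if `B` has even length. Expansion commutes with repeating a block of
even length, which reduces the even case at depth `d + 1` to the general case at depth `d`.
Writing `B ^ a = B ^ (a % 2) ++ (B ++ B) ^ (a / 2)`, where `B ++ B` expands to a block of even
length, reduces the general case at depth `d + 1` to the even case at depth `d`, at the cost of
one bit of `a`.
-/

namespace Function

variable {α β : Type*}

theorem minimalPeriod_eq_of_semiconj {fa : α → α} {fb : β → β} {g : α → β}
    (hg : Injective g) (h : Semiconj g fa fb) (x : α) :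
    minimalPeriod fb (g x) = minimalPeriod fa x :=
  minimalPeriod_eq_minimalPeriod_iff.2 fun k => by
    rw [IsPeriodicPt, IsFixedPt, ← (h.iterate_right k) x, hg.eq_iff]; rfl

theorem minimalPeriod_eq_of_eqOn {f g : α → α} {s : Set α} (hf : Set.MapsTo f s s)
    (hfg : Set.EqOn f g s) {x : α} (hx : x ∈ s) : minimalPeriod f x = minimalPeriod g x := by
  have iterate_eq : ∀ k, f^[k] x = g^[k] x := by
    intro k
    induction k with
    | zero => rfl
    | succ k ih =>
      rw [iterate_succ_apply', iterate_succ_apply', ← ih, hfg (hf.iterate k hx)]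
  exact minimalPeriod_eq_minimalPeriod_iff.2 fun k => by
    rw [IsPeriodicPt, IsFixedPt, IsPeriodicPt, IsFixedPt, iterate_eq]

end Function

namespace TorsionOrbit

def letter (N : ℕ) (b : Bool) : ℕ := bif b then N else 1

lemma letter_le (N : ℕ) (b : Bool) : letter N b ≤ 1 + N := by
  cases b <;> simp [letter]

lemma one_add_sub_letter (N : ℕ) (b : Bool) : 1 + N - letter N b = letter N (!b) := by
  cases b <;> simp [letter]

lemma letter_injective {N : ℕ} (hN : N ≠ 1) : Function.Injective (letter N) := by
  intro b c h
  cases b <;> cases c <;> simp_all [letter, eq_comm]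

lemma letter_pos {N : ℕ} (hN : 0 < N) (b : Bool) : 0 < letter N b := by
  cases b <;> simp [letter, hN]

lemma expand1_append (m n : ℕ) {x : ℕ} (hx : x ≤ m + n) (u v : List ℕ) :
    expand1 m n x (u ++ v) =
      expand1 m n x u ++ expand1 m n (if u.length % 2 = 0 then x else m + n - x) v := by
  induction u generalizing x with
  | nil => simp [expand1]
  | cons a l ih =>
    rw [List.cons_append, expand1, ih (Nat.sub_le _ _), expand1, List.append_assoc,
      Nat.sub_sub_self hx, List.length_cons]
    congr 3
    split_ifs <;> omega

lemma length_expand1 (m n x : ℕ) (u : List ℕ) : (expand1 m n x u).length = u.sum := by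
  induction u generalizing x with
  | nil => rfl
  | cons a l ih => simp [expand1, ih]

lemma getLastD_expand1 (m n : ℕ) {x : ℕ} (hx : x ≤ m + n) {u : List ℕ}
    (hu : 0 < u.getLastD 0) :
    (expand1 m n x u).getLastD 0 = if u.length % 2 = 1 then x else m + n - x := by
  obtain rfl | ⟨l, a, rfl⟩ := List.eq_nil_or_concat u
  · simp at hu
  · rw [List.concat_eq_append] at hu ⊢
    obtain ⟨c, rfl⟩ : ∃ c, a = c + 1 := ⟨a - 1, by rw [List.getLastD_concat] at hu; omega⟩
    rw [expand1_append m n hx, expand1, expand1, List.append_nil, List.replicate_succ',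
      ← List.append_assoc, List.getLastD_concat, List.length_append, List.length_singleton]
    split_ifs <;> omega

lemma expand_concat (m n : ℕ) (s t : List ℕ) (x : ℕ) :
    expand m n s (t ++ [x]) = expand1 m n x (expand m n s t) := by
  induction t generalizing s with
  | nil => rfl
  | cons y t ih => exact ih _

def rep (B : List ℕ) (a : ℕ) : List ℕ := (List.replicate a B).flatten

lemma rep_succ (B : List ℕ) (a : ℕ) : rep B (a + 1) = B ++ rep B a := by
  simp [rep, List.replicate_succ]

lemma length_rep (B : List ℕ) (a : ℕ) : (rep B a).length = a * B.length := by
  simp [rep, List.sum_replicate]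

lemma length_rep_mod_two {B B' : List ℕ} {a a' : ℕ} (hB : B.length % 2 = B'.length % 2)
    (h : B.length % 2 = 0 ∨ a % 2 = a' % 2) : (rep B a).length % 2 = (rep B' a').length % 2 := by
  rw [length_rep, length_rep, Nat.mul_mod, Nat.mul_mod a', ← hB]
  rcases h with h | h <;> simp [h]

lemma rep_singleton (x a : ℕ) : rep [x] a = List.replicate a x := by
  simp [rep]

lemma rep_add (B : List ℕ) (a c : ℕ) : rep B (a + c) = rep B a ++ rep B c := by
  rw [rep, List.replicate_add, List.flatten_append, rep, rep]

lemma rep_two_mul (B : List ℕ) (e : ℕ) : rep B (2 * e) = rep (B ++ B) e := by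
  induction e with
  | zero => rfl
  | succ e ih =>
    rw [show 2 * (e + 1) = 2 * e + 1 + 1 by ring, rep_succ, rep_succ, ih, rep_succ,
      List.append_assoc]

lemma rep_eq_append (B : List ℕ) (a : ℕ) :
    rep B a = rep B (a % 2) ++ rep (B ++ B) (a / 2) := by
  rw [← rep_two_mul, ← rep_add, Nat.mod_add_div]

lemma expand1_rep (m n : ℕ) {x : ℕ} (hx : x ≤ m + n) {B : List ℕ} (hB : B.length % 2 = 0)
    (a : ℕ) : expand1 m n x (rep B a) = rep (expand1 m n x B) a := by
  induction a with
  | zero => rfl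
  | succ a ih => rw [rep_succ, expand1_append m n hx, if_pos hB, ih, rep_succ]

/-- `SameParity n n' d u u'`: expanding `u` with `{1, n}` and `u'` with `{1, n'}` along any common
word of at most `d` letters gives lists whose lengths have the same parity. -/
def SameParity (n n' : ℕ) : ℕ → List ℕ → List ℕ → Prop
  | 0, u, u' => u.length % 2 = u'.length % 2
  | d + 1, u, u' => u.length % 2 = u'.length % 2 ∧
      ∀ b, SameParity n n' d (expand1 1 n (letter n b) u) (expand1 1 n' (letter n' b) u')

variable {n n' : ℕ}

lemma SameParity.length_mod_two {d : ℕ} {u u' : List ℕ} (h : SameParity n n' d u u') :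
    u.length % 2 = u'.length % 2 := by
  cases d
  exacts [h, h.1]

lemma sameParity_nil (d : ℕ) : SameParity n n' d [] [] := by
  induction d with
  | zero => rfl
  | succ d ih => exact ⟨rfl, fun _ => ih⟩

lemma SameParity.append {d : ℕ} {u u' v v' : List ℕ} (hu : SameParity n n' d u u')
    (hv : SameParity n n' d v v') : SameParity n n' d (u ++ v) (u' ++ v') := by
  induction d generalizing u u' v v' with
  | zero =>
    change (u ++ v).length % 2 = (u' ++ v').length % 2
    have := hu.length_mod_two
    have := hv.length_mod_two
    simp only [List.length_append]
    omega
  | succ d ih =>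
    refine ⟨by have := hu.1; have := hv.1; simp only [List.length_append]; omega, fun b => ?_⟩
    rw [expand1_append 1 n (letter_le n b), expand1_append 1 n' (letter_le n' b), ← hu.1]
    split_ifs
    · exact ih (hu.2 b) (hv.2 b)
    · rw [one_add_sub_letter, one_add_sub_letter]
      exact ih (hu.2 b) (hv.2 !b)

lemma SameParity.rep_self {d : ℕ} {B B' : List ℕ} (h : SameParity n n' d B B') (a : ℕ) :
    SameParity n n' d (rep B a) (rep B' a) := by
  induction a with
  | zero => exact sameParity_nil d
  | succ a ih => rw [rep_succ, rep_succ]; exact h.append ih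

lemma SameParity.rep_of_even_length {d : ℕ} {B B' : List ℕ} {a a' : ℕ}
    (hB : B.length % 2 = 0) (h : SameParity n n' (d + 1) B B')
    (hexp : ∀ b, SameParity n n' d (rep (expand1 1 n (letter n b) B) a)
      (rep (expand1 1 n' (letter n' b) B') a')) :
    SameParity n n' (d + 1) (rep B a) (rep B' a') := by
  have hB' : B'.length % 2 = 0 := h.1 ▸ hB
  refine ⟨length_rep_mod_two h.1 (.inl hB), fun b => ?_⟩
  rw [expand1_rep 1 n (letter_le n b) hB, expand1_rep 1 n' (letter_le n' b) hB']
  exact hexp b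

lemma sameParity_rep (d : ℕ) :
    (∀ {B B' : List ℕ} {a a' : ℕ}, B.length % 2 = 0 → SameParity n n' d B B' →
      a ≡ a' [MOD 2 ^ ((d + 1) / 2)] → SameParity n n' d (rep B a) (rep B' a')) ∧
    (∀ {B B' : List ℕ} {a a' : ℕ}, SameParity n n' d B B' →
      a ≡ a' [MOD 2 ^ (d / 2 + 1)] → SameParity n n' d (rep B a) (rep B' a')) := by
  induction d with
  | zero =>
    exact ⟨fun hB h _ => length_rep_mod_two h (.inl hB),
      fun h ha => length_rep_mod_two h (.inr ha)⟩
  | succ d ih =>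
    obtain ⟨ihEven, ihAny⟩ := ih
    refine ⟨fun hB h ha => h.rep_of_even_length hB fun b => ihAny (h.2 b) ?_,
      fun {B B' a a'} h ha => ?_⟩
    · rwa [show (d + 1 + 1) / 2 = d / 2 + 1 by omega] at ha
    have hmod2 : a % 2 = a' % 2 :=
      Nat.ModEq.of_dvd (dvd_pow_self 2 (Nat.succ_ne_zero _)) ha
    have hhalf : a / 2 ≡ a' / 2 [MOD 2 ^ ((d + 1) / 2)] := by
      refine Nat.ModEq.mul_left_cancel' two_ne_zero ?_
      rw [← pow_succ']
      refine Nat.ModEq.add_left_cancel' (a % 2) ?_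
      rwa [Nat.mod_add_div, hmod2, Nat.mod_add_div]
    rw [rep_eq_append B a, rep_eq_append B' a', hmod2]
    -- `B ++ B` has even length, and its expansions too, having even sum
    have hsquare : (B ++ B).length % 2 = 0 := by rw [List.length_append]; omega
    refine (h.rep_self _).append ((h.append h).rep_of_even_length hsquare fun b =>
      ihEven ?_ ((h.append h).2 b) hhalf)
    rw [length_expand1, List.sum_append]
    omega

lemma sameParity_letter {d : ℕ} (h : n ≡ n' [MOD 2 ^ ((d + 1) / 2)]) (b : Bool) :
    SameParity n n' d [letter n b] [letter n' b] := by
  induction d generalizing b with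
  | zero => rfl
  | succ d ih =>
    refine ⟨rfl, fun c => ?_⟩
    have hletter : letter n b ≡ letter n' b [MOD 2 ^ (d / 2 + 1)] := by
      cases b
      · rfl
      · rwa [show (d + 1 + 1) / 2 = d / 2 + 1 by omega] at h
    simp only [expand1, List.append_nil, ← rep_singleton]
    exact (sameParity_rep d).2 (ih (Nat.ModEq.of_dvd (pow_dvd_pow 2 (by omega)) h) c) hletter

lemma SameParity.length_expand_mod_two {d : ℕ} {u u' : List ℕ} (h : SameParity n n' d u u')
    {bs : List Bool} (hbs : bs.length ≤ d) :
    (expand 1 n u (bs.map (letter n))).length % 2 =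
      (expand 1 n' u' (bs.map (letter n'))).length % 2 := by
  induction bs generalizing d u u' with
  | nil => exact h.length_mod_two
  | cons b bs ih =>
    obtain _ | d := d
    · simp at hbs
    · exact ih (h.2 b) (by simpa using hbs)

/-- `C_{1,N}(1, -)` transported to bit strings through `letter N`. -/
def bitTorsion (N : ℕ) (bs : List Bool) : List Bool :=
  (List.range bs.length).map fun k =>
    bs.getD k false ^^ decide ((expand 1 N [1] ((bs.take k).map (letter N))).length % 2 = 1)

lemma length_bitTorsion (N : ℕ) (bs : List Bool) : (bitTorsion N bs).length = bs.length := by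
  simp [bitTorsion]

lemma getLastD_expand_pos {N : ℕ} (hN : 0 < N) {u : List ℕ} (hu : 0 < u.getLastD 0)
    (bs : List Bool) : 0 < (expand 1 N u (bs.map (letter N))).getLastD 0 := by
  induction bs generalizing u with
  | nil => exact hu
  | cons b bs ih =>
    refine ih ?_
    rw [getLastD_expand1 1 N (letter_le N b) hu, one_add_sub_letter]
    split_ifs <;> exact letter_pos hN _

lemma semiconj_bitTorsion {N : ℕ} (hN : 0 < N) :
    Function.Semiconj (List.map (letter N)) (bitTorsion N) (torsion 1 N [1]) := by
  intro bs
  simp only [torsion, bitTorsion, List.length_map, List.map_map]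
  refine List.map_congr_left fun k hmem => ?_
  have hk : k < bs.length := List.mem_range.mp hmem
  rw [← List.map_take, List.take_add_one, List.getElem?_eq_getElem hk, Option.toList_some,
    List.map_append, List.map_singleton, expand_concat,
    getLastD_expand1 1 N (letter_le N _) (getLastD_expand_pos hN (by simp) _),
    Function.comp_apply, List.getD_eq_getElem _ _ hk]
  split_ifs with hodd <;> simp [-List.map_take, hodd, one_add_sub_letter]

lemma length_expand_one_mod_two_eq {bs : List Bool}
    (h : n ≡ n' [MOD 2 ^ ((bs.length + 1) / 2)]) :
    (expand 1 n [1] (bs.map (letter n))).length % 2 =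
      (expand 1 n' [1] (bs.map (letter n'))).length % 2 :=
  (sameParity_letter h false).length_expand_mod_two le_rfl

lemma eqOn_bitTorsion {L : ℕ} (h : n ≡ n' [MOD 2 ^ (L / 2)]) :
    Set.EqOn (bitTorsion n) (bitTorsion n') {bs | bs.length = L} := by
  intro bs hbs
  refine List.map_congr_left fun k hmem => ?_
  have hk : k < L := hbs ▸ List.mem_range.mp hmem
  have hprefix : (bs.take k).length ≤ k := List.length_take_le k bs
  rw [length_expand_one_mod_two_eq (Nat.ModEq.of_dvd (pow_dvd_pow 2 (by omega)) h)]

lemma minimalPeriod_torsion_eq_bitTorsion {N : ℕ} (hN : 2 ≤ N) (L : ℕ) :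
    Function.minimalPeriod (torsion 1 N [1]) (List.replicate L 1) =
      Function.minimalPeriod (bitTorsion N) (List.replicate L false) := by
  rw [show List.replicate L 1 = (List.replicate L false).map (letter N) by simp [letter]]
  exact Function.minimalPeriod_eq_of_semiconj (letter_injective (by omega)).list_map
    (semiconj_bitTorsion (by omega)) _

theorem minimalPeriod_torsion_eq {L : ℕ} (hn : 2 ≤ n) (hn' : 2 ≤ n')
    (h : n ≡ n' [MOD 2 ^ (L / 2)]) :
    Function.minimalPeriod (torsion 1 n [1]) (List.replicate L 1) =
      Function.minimalPeriod (torsion 1 n' [1]) (List.replicate L 1) := by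
  rw [minimalPeriod_torsion_eq_bitTorsion hn, minimalPeriod_torsion_eq_bitTorsion hn']
  exact Function.minimalPeriod_eq_of_eqOn (fun bs hbs => (length_bitTorsion n bs).trans hbs)
    (eqOn_bitTorsion h) List.length_replicate

end TorsionOrbit

theorem orbit_length_mod_invariant_general (j n n' : ℕ)
    (hn : 0 < n) (hn' : 0 < n') (hne : Even n) (hne' : Even n')
    (hmod : n ≡ n' [MOD 2 ^ (j - 1)]) :
    Function.minimalPeriod (torsion 1 n [1]) (List.replicate (2 * j - 1) 1) =
      Function.minimalPeriod (torsion 1 n' [1]) (List.replicate (2 * j - 1) 1) ∧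
    (Function.minimalPeriod (torsion 1 n [1]) (List.replicate (2 * j - 1) 1) = 2 ^ j ↔
      Function.minimalPeriod (torsion 1 n' [1]) (List.replicate (2 * j - 1) 1) = 2 ^ j) := by
  have hn2 : 2 ≤ n := by obtain ⟨r, rfl⟩ := hne; omega
  have hn2' : 2 ≤ n' := by obtain ⟨r, rfl⟩ := hne'; omega
  have hperiod := TorsionOrbit.minimalPeriod_torsion_eq hn2 hn2'
    (by rwa [show (2 * j - 1) / 2 = j - 1 by omega])
  exact ⟨hperiod, by rw [hperiod]⟩

/-- For `j > 0` and positive even `n ≡ n' (mod 2^{j-1})`, the orbit of `1^{2j-1}` under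
`t ↦ C_{1,n}(1, t)` has the same length as the orbit of `1^{2j-1}` under
`t ↦ C_{1,n'}(1, t)`; in particular one has length `2^j` iff the other does. -/
theorem orbit_length_mod_invariant (j n n' : ℕ) (hj : 0 < j)
    (hn : 0 < n) (hn' : 0 < n') (hne : Even n) (hne' : Even n')
    (hmod : n ≡ n' [MOD 2 ^ (j - 1)]) :
    Function.minimalPeriod (torsion 1 n [1]) (List.replicate (2 * j - 1) 1) =
      Function.minimalPeriod (torsion 1 n' [1]) (List.replicate (2 * j - 1) 1) ∧
    (Function.minimalPeriod (torsion 1 n [1]) (List.replicate (2 * j - 1) 1) = 2 ^ j ↔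
      Function.minimalPeriod (torsion 1 n' [1]) (List.replicate (2 * j - 1) 1) = 2 ^ j) :=
  orbit_length_mod_invariant_general j n n' hn hn' hne hne' hmod
end

section
/- Let j > 0, let n and n' be positive even integers with n ≡ n' (mod 2^{j-1}), and let 1 ≤ k ≤ 2j−1. For a sequence s, let F(s) be the sequence obtained from s by replacing every term not equal to 1 with 0, and for a sequence s with values in {1, 0}, let G_n(s) be the sequence obtained by replacing every 0 with n. Then: (a) for every t in {1, 0}^k, F(C_{1,n}(1, G_n(t))) = F(C_{1,n'}(1, G_{n'}(t))); and (b) for every t in {1, 0}^k, F(C_{1,n}(n, G_n(t))) = F(C_{1,n'}(n', G_{n'}(t))). -/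
/-- `F s` replaces every term of `s` not equal to `1` with `0`. -/
def keepOnes (s : List ℕ) : List ℕ := s.map fun a => if a = 1 then 1 else 0

/-- `G_n s` replaces every occurrence of `0` in `s` with `n`. -/
def substZeros (n : ℕ) (s : List ℕ) : List ℕ := s.map fun a => if a = 0 then n else a

/-!
Code sequences over `{1, n}` by bit strings (`true ↦ n`). The last term of `E(s, t⁽ᵏ⁾)` is
`t_k` or its complement according to the parity of `|E(s, t⁽ᵏ⁻¹⁾)|`, and `F` of the `k`-th
torsion term records exactly that last term. So it suffices that the parity of the length of
an iterated expansion of depth at most `2 (j - 1)` does not change when `n` is replaced by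
`n' ≡ n (mod 2^e)`, `e = j - 1`.

Call a string `r`-negligible if it and all its expansions of depth at most `r` have even
length. Passing from `n` to `n' ≥ n` lengthens every `n`-run by `n' - n`, i.e. inserts a run
of length divisible by `2^e`, which is `(2e - 1)`-negligible. One expansion step turns an
insertion of `(r + 1)`-negligible strings into an insertion of `r`-negligible ones, so after
at most `2e` steps the two expansions differ by insertions of even-length strings.
-/

namespace BitExpansion

/-- Sequences with values in `{1, n}` are coded by bit strings: `true ↦ n`, `false ↦ 1`. -/
def bitVal (n : ℕ) : Bool → ℕ
  | true => n
  | false => 1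

def bitExpand1 (n : ℕ) : Bool → List Bool → List Bool
  | _, [] => []
  | g, a :: w => List.replicate (bitVal n a) g ++ bitExpand1 n (!g) w

def bitExpand (n : ℕ) : List Bool → List Bool → List Bool
  | s, [] => s
  | s, g :: gs => bitExpand n (bitExpand1 n g s) gs

variable {n : ℕ}

theorem length_bitExpand1 (g : Bool) (w : List Bool) :
    (bitExpand1 n g w).length = (w.map (bitVal n)).sum := by
  induction w generalizing g with
  | nil => rfl
  | cons a w ih => simp [bitExpand1, ih]

theorem bitExpand1_append (g : Bool) :
    ∀ (u v : List Bool), Even u.length →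
      bitExpand1 n g (u ++ v) = bitExpand1 n g u ++ bitExpand1 n g v
  | [], _, _ => rfl
  | [_], _, hu => absurd hu (by simp)
  | a :: b :: u, v, hu => by
      have hu' : Even u.length := by simpa [Nat.even_add_one] using hu
      simp [bitExpand1, bitExpand1_append g u v hu']

theorem bitExpand1_ne_nil (hn : 0 < n) (g : Bool) {w : List Bool} (hw : w ≠ []) :
    bitExpand1 n g w ≠ [] := by
  obtain ⟨a, w, rfl⟩ := List.exists_cons_of_ne_nil hw
  have : 0 < bitVal n a := by cases a <;> simp [bitVal, hn]
  simp [bitExpand1, this.ne']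

theorem getLast?_bitExpand1 (hn : 0 < n) :
    ∀ (g : Bool) (w : List Bool), w ≠ [] →
      (bitExpand1 n g w).getLast? = some (g ^^ decide (Even w.length))
  | g, [a], _ => by
      have : bitVal n a ≠ 0 := by cases a <;> simp [bitVal, hn.ne']
      simp [bitExpand1, List.getLast?_replicate, this]
  | g, a :: b :: w, _ => by
      rw [bitExpand1, List.getLast?_append_of_ne_nil _ (bitExpand1_ne_nil hn _ (by simp)),
        getLast?_bitExpand1 hn _ (b :: w) (by simp)]
      cases g <;> simp [Nat.even_add_one, -Nat.not_even_iff_odd]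

theorem bitExpand_concat (s gs : List Bool) (g : Bool) :
    bitExpand n s (gs ++ [g]) = bitExpand1 n g (bitExpand n s gs) := by
  induction gs generalizing s with
  | nil => rfl
  | cons g' gs ih => exact ih _

theorem bitExpand_ne_nil (hn : 0 < n) (gs : List Bool) {s : List Bool} (hs : s ≠ []) :
    bitExpand n s gs ≠ [] := by
  induction gs generalizing s with
  | nil => exact hs
  | cons g gs ih => exact ih (bitExpand1_ne_nil hn g hs)

def Negligible (n : ℕ) : ℕ → List Bool → Prop
  | 0, w => Even w.length
  | r + 1, w => Even w.length ∧ ∀ g, Negligible n r (bitExpand1 n g w)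

theorem Negligible.even_length {r : ℕ} {w : List Bool} (h : Negligible n r w) :
    Even w.length := by
  cases r with
  | zero => exact h
  | succ r => exact h.1

theorem Negligible.of_succ {r : ℕ} {w : List Bool} (h : Negligible n (r + 1) w) :
    Negligible n r w := by
  induction r generalizing w with
  | zero => exact h.1
  | succ r ih => exact ⟨h.1, fun g => ih (h.2 g)⟩

theorem Negligible.mono {r r' : ℕ} (hr : r' ≤ r) {w : List Bool} (h : Negligible n r w) :
    Negligible n r' w := by
  induction hr with
  | refl => exact h
  | step _ ih => exact ih h.of_succ

theorem negligible_one_append_self (p : List Bool) : Negligible n 1 (p ++ p) := by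
  refine ⟨by simp, fun g => ?_⟩
  simp [Negligible, length_bitExpand1]

theorem Negligible.append_self : ∀ {r : ℕ} {w : List Bool}, Negligible n r w →
    Negligible n (r + 2) (w ++ w)
  | 0, w, h => ⟨by simp, fun g => by
      rw [bitExpand1_append g w w h]; exact negligible_one_append_self _⟩
  | _ + 1, w, h => ⟨by simp, fun g => by
      rw [bitExpand1_append g w w h.1]; exact (h.2 g).append_self⟩

/-- Halve the run `e` times; each doubling raises negligibility by two. -/
theorem negligible_replicate (c : Bool) :
    ∀ (e : ℕ) {m : ℕ}, 2 ^ (e + 1) ∣ m → Negligible n (2 * e + 1) (List.replicate m c)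
  | 0, _, ⟨d, rfl⟩ => by
      rw [show 2 ^ (0 + 1) * d = d + d by ring, List.replicate_add]
      exact negligible_one_append_self _
  | e + 1, _, ⟨d, rfl⟩ => by
      rw [show 2 ^ (e + 1 + 1) * d = 2 ^ (e + 1) * d + 2 ^ (e + 1) * d by ring,
        List.replicate_add]
      exact (negligible_replicate c e ⟨d, rfl⟩).append_self

inductive InsertNegligible (n r : ℕ) : List Bool → List Bool → Prop
  | nil : InsertNegligible n r [] []
  | cons (a : Bool) {b b' : List Bool} :
      InsertNegligible n r b b' → InsertNegligible n r (a :: b) (a :: b')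
  | insert {w b b' : List Bool} :
      Negligible n r w → InsertNegligible n r b b' → InsertNegligible n r b (w ++ b')

namespace InsertNegligible

variable {r : ℕ}

theorem refl (n r : ℕ) : ∀ w : List Bool, InsertNegligible n r w w
  | [] => nil
  | a :: w => cons a (refl n r w)

theorem append_left {b b' : List Bool} (h : InsertNegligible n r b b') :
    ∀ u : List Bool, InsertNegligible n r (u ++ b) (u ++ b')
  | [] => h
  | a :: u => cons a (append_left h u)

theorem even_length_iff {b b' : List Bool} (h : InsertNegligible n r b b') :
    Even b.length ↔ Even b'.length := by
  induction h with
  | nil => rfl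
  | cons _ _ ih => simp [Nat.even_add_one, ih]
  | insert hw _ ih => simp [ih, Nat.even_add, hw.even_length]

/-- Lengthening the `n`-runs to `n'`-runs inserts a run of length `n' - n` inside each. -/
theorem bitExpand1 {n' : ℕ} (hle : n ≤ n')
    (hd : ∀ c, Negligible n' r (List.replicate (n' - n) c)) {b b' : List Bool}
    (h : InsertNegligible n' (r + 1) b b') (g : Bool) :
    InsertNegligible n' r (BitExpansion.bitExpand1 n g b) (BitExpansion.bitExpand1 n' g b') := by
  induction h generalizing g with
  | nil => exact nil
  | @cons a b b' _ ih =>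
      cases a with
      | false => exact cons g (ih !g)
      | true =>
          have hsplit : List.replicate n' g = List.replicate n g ++ List.replicate (n' - n) g := by
            rw [← List.replicate_add, Nat.add_sub_cancel' hle]
          simp only [BitExpansion.bitExpand1, bitVal, hsplit, List.append_assoc]
          exact (insert (hd g) (ih !g)).append_left _
  | insert hw _ ih =>
      rw [bitExpand1_append g _ _ hw.even_length]
      exact insert (hw.2 g) (ih g)

theorem bitExpand {n' R : ℕ} (hle : n ≤ n')
    (hd : ∀ c, Negligible n' R (List.replicate (n' - n) c)) :
    ∀ (gs : List Bool) {r : ℕ} {b b' : List Bool}, r + gs.length ≤ R + 1 →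
      InsertNegligible n' (r + gs.length) b b' →
      InsertNegligible n' r (BitExpansion.bitExpand n b gs) (BitExpansion.bitExpand n' b' gs)
  | [], _, _, _, _, h => h
  | g :: gs, r, _, _, hlen, h => by
      simp only [List.length_cons, ← Nat.add_assoc] at hlen h
      exact bitExpand hle hd gs (by omega)
        (h.bitExpand1 hle (fun c => (hd c).mono (by omega)) g)

end InsertNegligible

theorem even_length_bitExpand_iff_of_modEq {n' e : ℕ} (hmod : n ≡ n' [MOD 2 ^ e])
    (s : List Bool) {gs : List Bool} (hgs : gs.length ≤ 2 * e) :
    Even (bitExpand n s gs).length ↔ Even (bitExpand n' s gs).length := by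
  wlog hle : n ≤ n' generalizing n n'
  · exact (this hmod.symm (le_of_not_ge hle)).symm
  cases e with
  | zero =>
      obtain rfl : gs = [] := List.length_eq_zero_iff.mp (by omega)
      rfl
  | succ e =>
      have hd (c : Bool) : Negligible n' (2 * e + 1) (List.replicate (n' - n) c) :=
        negligible_replicate c e ((Nat.modEq_iff_dvd' hle).mp hmod)
      exact (InsertNegligible.bitExpand hle hd gs (r := 0) (by omega)
        (InsertNegligible.refl n' _ s)).even_length_iff

theorem map_bitVal_bitExpand1 (g : Bool) (w : List Bool) :
    (bitExpand1 n g w).map (bitVal n) = expand1 1 n (bitVal n g) (w.map (bitVal n)) := by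
  induction w generalizing g with
  | nil => rfl
  | cons a w ih =>
      have hflip : 1 + n - bitVal n g = bitVal n !g := by cases g <;> simp [bitVal]
      simp [bitExpand1, expand1, hflip, ih]

theorem map_bitVal_bitExpand (s gs : List Bool) :
    (bitExpand n s gs).map (bitVal n) = expand 1 n (s.map (bitVal n)) (gs.map (bitVal n)) := by
  induction gs generalizing s with
  | nil => rfl
  | cons g gs ih => simp [bitExpand, expand, ih, map_bitVal_bitExpand1]

theorem keepOnes_torsion_map_bitVal (hn : 2 ≤ n) {s : List Bool} (hs : s ≠ [])
    (gs : List Bool) :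
    keepOnes (torsion 1 n (s.map (bitVal n)) (gs.map (bitVal n))) =
      (List.range gs.length).map fun k =>
        (gs.getD k false ^^ decide (Even (bitExpand n s (gs.take k)).length)).toNat := by
  simp only [keepOnes, torsion, List.length_map, List.map_map]
  refine List.map_congr_left fun k hk => ?_
  have hk : k < gs.length := List.mem_range.mp hk
  rw [Function.comp_apply, ← List.map_take, ← map_bitVal_bitExpand, List.take_add_one,
    List.getElem?_eq_getElem hk, Option.toList_some, bitExpand_concat,
    List.getLastD_eq_getLast?, List.getLast?_map,
    getLast?_bitExpand1 (by omega) _ _ (bitExpand_ne_nil (by omega) _ hs),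
    List.getD_eq_getElem?_getD, List.getElem?_eq_getElem hk, Option.map_some,
    Option.getD_some, Option.getD_some]
  generalize (gs[k] ^^ _) = b
  cases b with
  | false => simp [bitVal]; omega
  | true => simp [bitVal]

theorem keepOnes_torsion_eq_of_modEq {n' e : ℕ} (hn : 2 ≤ n) (hn' : 2 ≤ n')
    (hmod : n ≡ n' [MOD 2 ^ e]) {s : List Bool} (hs : s ≠ []) {gs : List Bool}
    (hgs : gs.length ≤ 2 * e + 1) :
    keepOnes (torsion 1 n (s.map (bitVal n)) (gs.map (bitVal n))) =
      keepOnes (torsion 1 n' (s.map (bitVal n')) (gs.map (bitVal n'))) := by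
  rw [keepOnes_torsion_map_bitVal hn hs, keepOnes_torsion_map_bitVal hn' hs]
  refine List.map_congr_left fun k hk => ?_
  have hk : k < gs.length := List.mem_range.mp hk
  rw [decide_eq_decide.mpr (even_length_bitExpand_iff_of_modEq hmod s
    (by rw [List.length_take]; omega))]

theorem substZeros_eq_map_bitVal {t : List ℕ} (ht : ∀ a ∈ t, a = 1 ∨ a = 0) :
    substZeros n t = (t.map fun a => decide (a = 0)).map (bitVal n) := by
  simp only [substZeros, List.map_map]
  refine List.map_congr_left fun a ha => ?_
  rcases ht a ha with rfl | rfl <;> rfl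

end BitExpansion

open BitExpansion in
theorem torsion_mod_invariant_general (j n n' k : ℕ)
    (hn : 0 < n) (hn' : 0 < n') (hne : Even n) (hne' : Even n')
    (hmod : n ≡ n' [MOD 2 ^ (j - 1)])
    (hk2 : k ≤ 2 * j - 1)
    (t : List ℕ) (htl : t.length = k) (htv : ∀ a ∈ t, a = 1 ∨ a = 0) :
    keepOnes (torsion 1 n [1] (substZeros n t)) =
      keepOnes (torsion 1 n' [1] (substZeros n' t)) ∧
    keepOnes (torsion 1 n [n] (substZeros n t)) =
      keepOnes (torsion 1 n' [n'] (substZeros n' t)) := by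
  have two_le {m : ℕ} (hm : 0 < m) (he : Even m) : 2 ≤ m := by
    obtain ⟨c, rfl⟩ := he; omega
  rw [substZeros_eq_map_bitVal htv, substZeros_eq_map_bitVal htv]
  have key (s : List Bool) (hs : s ≠ []) :=
    keepOnes_torsion_eq_of_modEq (two_le hn hne) (two_le hn' hne') hmod hs
      (gs := t.map fun a => decide (a = 0)) (by rw [List.length_map]; omega)
  exact ⟨key [false] (by simp), key [true] (by simp)⟩

/-- For `j > 0`, positive even `n ≡ n' (mod 2^{j-1})`, `1 ≤ k ≤ 2j - 1`, and
`t ∈ {1, 0}^k`: (a) `F(C_{1,n}(1, Gₙ(t))) = F(C_{1,n'}(1, G_{n'}(t)))` and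
(b) `F(C_{1,n}(n, Gₙ(t))) = F(C_{1,n'}(n', G_{n'}(t)))`. -/
theorem torsion_mod_invariant (j n n' k : ℕ) (hj : 0 < j)
    (hn : 0 < n) (hn' : 0 < n') (hne : Even n) (hne' : Even n')
    (hmod : n ≡ n' [MOD 2 ^ (j - 1)])
    (hk1 : 1 ≤ k) (hk2 : k ≤ 2 * j - 1)
    (t : List ℕ) (htl : t.length = k) (htv : ∀ a ∈ t, a = 1 ∨ a = 0) :
    keepOnes (torsion 1 n [1] (substZeros n t)) =
      keepOnes (torsion 1 n' [1] (substZeros n' t)) ∧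
    keepOnes (torsion 1 n [n] (substZeros n t)) =
      keepOnes (torsion 1 n' [n'] (substZeros n' t)) :=
  torsion_mod_invariant_general j n n' k hn hn' hne hne' hmod hk2 t htl htv
end

section
/- Let m and n be distinct integers (possibly nonpositive) and let x be an integer. Then for every k > 0, the generalized torsion map t ↦ C_{m,n}(x, t) is a length-preserving bijection from {m, n}^k to {m, n}^k, and the orbit of every t in {m, n}^k under this map has length dividing 2^{⌈k/2⌉}. -/
/-- Prepend a term to a list of length `k`, giving a list of length `k + 1`. -/
def gtCons (a : ℤ) {k : ℕ} (y : {l : List ℤ // l.length = k}) :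
    {l : List ℤ // l.length = k + 1} :=
  ⟨a :: y.1, by simp [y.2]⟩

/-- The tail of a list of length `k + 1`, as a list of length `k`. -/
def gtTail {k : ℕ} (t : {l : List ℤ // l.length = k + 1}) : {l : List ℤ // l.length = k} :=
  ⟨t.1.tail, by simp [t.2]⟩

/-- The generalized torsion map `C_{m,n}(x, −)` on sequences of length `k`, as a
permutation, defined by induction on `k`:  `C_{m,n}(x, t₁ t') = (m + n − t₁) ·
(C_{m,n}(t₁, −))^x (t')`, where the `x`-th iterate (`x ∈ ℤ`, possibly negative) is the
`zpow` of the permutation `C_{m,n}(t₁, −)` of length-`(k-1)` sequences. -/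
def gtPerm (m n : ℤ) : (k : ℕ) → ℤ → Equiv.Perm {l : List ℤ // l.length = k}
  | 0, _ => Equiv.refl _
  | k + 1, x =>
    { toFun := fun t =>
        gtCons (m + n - t.1.headD 0) ((gtPerm m n k (t.1.headD 0) ^ x) (gtTail t))
      invFun := fun u =>
        gtCons (m + n - u.1.headD 0) ((gtPerm m n k (m + n - u.1.headD 0) ^ (-x)) (gtTail u))
      left_inv := by
        rintro ⟨l, hl⟩
        obtain ⟨a, l', rfl⟩ : ∃ a l', l = a :: l' := by
          cases l with
          | nil => simp at hl
          | cons a l' => exact ⟨a, l', rfl⟩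
        simp only [gtCons, gtTail, List.headD_cons, List.tail_cons, sub_sub_cancel,
          Subtype.coe_eta, ← Equiv.Perm.mul_apply, ← zpow_add, neg_add_cancel, zpow_zero,
          Equiv.Perm.coe_one, id_eq]
      right_inv := by
        rintro ⟨l, hl⟩
        obtain ⟨a, l', rfl⟩ : ∃ a l', l = a :: l' := by
          cases l with
          | nil => simp at hl
          | cons a l' => exact ⟨a, l', rfl⟩
        simp only [gtCons, gtTail, List.headD_cons, List.tail_cons, sub_sub_cancel,
          Subtype.coe_eta, ← Equiv.Perm.mul_apply, ← zpow_add, add_neg_cancel, zpow_zero,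
          Equiv.Perm.coe_one, id_eq] }

/-- The generalized torsion `C_{m,n}(x, t)` for arbitrary integers `m ≠ n` and `x`. -/
def gtorsion (m n : ℤ) (x : ℤ) (t : List ℤ) : List ℤ :=
  (gtPerm m n t.length x ⟨t, rfl⟩).1

/-!
Read on `ℤ^k`, the map `C_{m,n}(x, −)` has a tower shape: it sends `a :: t` to `σ a :: g_a t`
with `σ a = m + n − a`, where the tail permutations `g_a = C_{m,n}(a, −)^x` are of tower shape
again and all act on their own first letter by the same `σ^x`. Pairs (tower permutation, action
on the first letter) form a subgroup, so powers and inverses stay in the tower. When every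
first-letter action is an involution, `f²` fixes the first letter and acts on each tail by a
tower permutation with trivial first-letter action, so each squaring strips two levels and the
order of `f` divides `2^⌈k/2⌉`. The set `{m, n}^k` is preserved because `σ` swaps `m` and `n`.
-/

open Equiv Function Set Pointwise

section Tower

variable {α : Type*}

/-- The second component records how the permutation acts on the first letter (for `k = 0`,
where there is no first letter, it is just an element of `K`). -/
def towerSubgroup (K : Subgroup (Perm α)) :
    (k : ℕ) → Subgroup (Perm (List.Vector α k) × Perm α)
  | 0 => (⊤ : Subgroup (Perm (List.Vector α 0))).prod K
  | k + 1 =>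
    { carrier := {p | p.2 ∈ K ∧ ∃ (δ : Perm α) (g : α → Perm (List.Vector α k)),
        (∀ a, (g a, δ) ∈ towerSubgroup K k) ∧ ∀ a t, p.1 (a ::ᵥ t) = p.2 a ::ᵥ g a t}
      one_mem' := ⟨K.one_mem, 1, fun _ => 1, fun _ => (towerSubgroup K k).one_mem, fun _ _ => rfl⟩
      mul_mem' := by
        rintro ⟨f, τ⟩ ⟨f', τ'⟩ ⟨hτ, δ, g, hg, hf⟩ ⟨hτ', δ', g', hg', hf'⟩
        refine ⟨K.mul_mem hτ hτ', δ * δ', fun a => g (τ' a) * g' a,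
          fun a => (towerSubgroup K k).mul_mem (hg _) (hg' a), fun a t => ?_⟩
        simp only [Prod.fst_mul, Prod.snd_mul, Perm.mul_apply, hf, hf']
      inv_mem' := by
        rintro ⟨f, τ⟩ ⟨hτ, δ, g, hg, hf⟩
        refine ⟨K.inv_mem hτ, δ⁻¹, fun a => (g (τ⁻¹ a))⁻¹,
          fun a => (towerSubgroup K k).inv_mem (hg _), fun a t => ?_⟩
        rw [Prod.fst_inv, Perm.inv_eq_iff_eq, hf]
        simp }

variable {K : Subgroup (Perm α)}

theorem snd_mem_of_mem_towerSubgroup : ∀ {k : ℕ} {p : Perm (List.Vector α k) × Perm α},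
    p ∈ towerSubgroup K k → p.2 ∈ K
  | 0, _, hp => (Subgroup.mem_prod.mp hp).2
  | _ + 1, _, hp => hp.1

theorem mapsTo_of_mem_towerSubgroup {s : Set α} (hKs : K ≤ MulAction.stabilizer (Perm α) s) :
    ∀ {k : ℕ} {f : Perm (List.Vector α k)} {τ : Perm α}, (f, τ) ∈ towerSubgroup K k →
      MapsTo f {v | ∀ a ∈ v.toList, a ∈ s} {v | ∀ a ∈ v.toList, a ∈ s}
  | 0, f, _, _, _, _ => by simp [(f _).eq_nil]
  | k + 1, f, τ, ⟨hτ, δ, g, hg, hf⟩, v, hv => by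
    obtain ⟨a, t, rfl⟩ : ∃ a t, v = a ::ᵥ t := ⟨_, _, (v.cons_head_tail).symm⟩
    simp only [mem_ofPred_eq, List.Vector.toList_cons, List.forall_mem_cons, hf] at hv ⊢
    refine ⟨?_, mapsTo_of_mem_towerSubgroup hKs (hg a) hv.2⟩
    simpa only [MulAction.mem_stabilizer_iff.mp (hKs hτ), Perm.smul_def] using
      Set.smul_mem_smul_set (a := τ) hv.1

theorem pow_apply_cons_of_forall_apply_cons {k : ℕ} {f : Perm (List.Vector α (k + 1))}
    {g : α → Perm (List.Vector α k)} (hf : ∀ a t, f (a ::ᵥ t) = a ::ᵥ g a t) (j : ℕ) (a : α)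
    (t : List.Vector α k) : (f ^ j) (a ::ᵥ t) = a ::ᵥ (g a ^ j) t := by
  induction j with
  | zero => rfl
  | succ j ih => rw [pow_succ', Perm.mul_apply, ih, hf, ← Perm.mul_apply, ← pow_succ']

theorem pow_eq_one_of_forall_apply_cons {k N : ℕ} {f : Perm (List.Vector α (k + 1))}
    {g : α → Perm (List.Vector α k)} (hf : ∀ a t, f (a ::ᵥ t) = a ::ᵥ g a t)
    (hg : ∀ a, g a ^ N = 1) : f ^ N = 1 := by
  ext1 v
  rw [← v.cons_head_tail, pow_apply_cons_of_forall_apply_cons hf, hg, Perm.one_apply,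
    Perm.one_apply]

/-- `f ^ 2` fixes the first letter `a` and acts on the tail by `g (τ a) * g a`, whose own
first-letter action is `δ * δ = 1`: each squaring strips two levels. -/
theorem pow_two_pow_eq_one_of_mem_towerSubgroup (hK : ∀ τ ∈ K, τ ^ 2 = 1) :
    ∀ {k : ℕ} {f : Perm (List.Vector α k)} {τ : Perm α}, (f, τ) ∈ towerSubgroup K k →
      f ^ 2 ^ ((k + 1) / 2) = 1 ∧ (τ = 1 → f ^ 2 ^ (k / 2) = 1)
  | 0, _, _, _ => ⟨Subsingleton.elim _ _, fun _ => Subsingleton.elim _ _⟩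
  | k + 1, f, τ, ⟨hτ, δ, g, hg, hf⟩ => by
    refine ⟨?_, ?_⟩
    · have hf2 : ∀ a t, (f ^ 2) (a ::ᵥ t) = a ::ᵥ (g (τ a) * g a) t := fun a t => by
        rw [sq, Perm.mul_apply, hf, hf, ← Perm.mul_apply τ, ← sq, hK τ hτ, Perm.one_apply,
          Perm.mul_apply]
      have hsq : ∀ a, (g (τ a) * g a) ^ 2 ^ (k / 2) = 1 := fun a => by
        have hδ : δ * δ = 1 := by rw [← sq, hK δ (snd_mem_of_mem_towerSubgroup (hg a))]
        have hprod := (towerSubgroup K k).mul_mem (hg (τ a)) (hg a)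
        rw [Prod.mk_mul_mk, hδ] at hprod
        exact (pow_two_pow_eq_one_of_mem_towerSubgroup hK hprod).2 rfl
      rw [show (k + 1 + 1) / 2 = k / 2 + 1 by omega, pow_succ', pow_mul]
      exact pow_eq_one_of_forall_apply_cons hf2 hsq
    · rintro rfl
      exact pow_eq_one_of_forall_apply_cons hf
        fun a => (pow_two_pow_eq_one_of_mem_towerSubgroup hK (hg a)).1

end Tower

section Lengthwise

variable {α : Type*} (F : (k : ℕ) → Perm (List.Vector α k))

def lengthwise (t : List α) : List α :=
  (F t.length ⟨t, rfl⟩).toList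

theorem length_lengthwise (t : List α) : (lengthwise F t).length = t.length :=
  (F t.length _).toList_length

theorem lengthwise_toList {k : ℕ} (v : List.Vector α k) :
    lengthwise F v.toList = (F k v).toList := by
  obtain ⟨t, rfl⟩ := v
  rfl

theorem iterate_lengthwise_toList {k : ℕ} (v : List.Vector α k) (j : ℕ) :
    (lengthwise F)^[j] v.toList = ((F k ^ j) v).toList := by
  induction j with
  | zero => rfl
  | succ j ih => rw [iterate_succ_apply', ih, lengthwise_toList, pow_succ', Perm.mul_apply]

theorem minimalPeriod_lengthwise_toList_dvd {k N : ℕ} (v : List.Vector α k)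
    (hF : F k ^ N = 1) : minimalPeriod (lengthwise F) v.toList ∣ N :=
  IsPeriodicPt.minimalPeriod_dvd <| by
    rw [IsPeriodicPt, IsFixedPt, iterate_lengthwise_toList, hF, Perm.one_apply]

theorem bijOn_lengthwise {k : ℕ} {p : List α → Prop}
    (hF : MapsTo (F k) {v | p v.toList} {v | p v.toList})
    (hF' : MapsTo ⇑(F k)⁻¹ {v | p v.toList} {v | p v.toList}) :
    BijOn (lengthwise F) {t | t.length = k ∧ p t} {t | t.length = k ∧ p t} := by
  have hvec : ∀ t ∈ {t : List α | t.length = k ∧ p t},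
      ∃ v : List.Vector α k, v.toList = t ∧ p t :=
    fun t ht => ⟨⟨t, ht.1⟩, rfl, ht.2⟩
  refine InvOn.bijOn (f' := lengthwise fun k => (F k)⁻¹) ⟨?_, ?_⟩ ?_ ?_ <;>
    intro t ht <;> obtain ⟨v, rfl, hv⟩ := hvec t ht
  · simp only [lengthwise_toList, Perm.coe_inv, symm_apply_apply]
  · simp only [lengthwise_toList, Perm.coe_inv, apply_symm_apply]
  · rw [lengthwise_toList]
    exact ⟨(F k v).toList_length, hF hv⟩
  · rw [lengthwise_toList]
    exact ⟨((F k)⁻¹ v).toList_length, hF' hv⟩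

end Lengthwise

theorem sq_eq_one_of_mem_zpowers {G : Type*} [Group G] {g : G} (hg : g ^ 2 = 1) :
    ∀ τ ∈ Subgroup.zpowers g, τ ^ 2 = 1 := by
  rintro _ ⟨i, rfl⟩
  rw [← zpow_natCast, ← zpow_mul, mul_comm, zpow_mul, zpow_natCast, hg, one_zpow]

section SubLeft

variable {A : Type*} [AddCommGroup A]

theorem subLeft_sq (c : A) : Equiv.subLeft c ^ 2 = 1 := by
  ext
  simp [sq]

theorem zpowers_subLeft_le_stabilizer_pair (m n : A) :
    Subgroup.zpowers (Equiv.subLeft (m + n)) ≤ MulAction.stabilizer (Perm A) ({m, n} : Set A) := by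
  rw [Subgroup.zpowers_le, MulAction.mem_stabilizer_iff, Set.smul_set_insert,
    Set.smul_set_singleton, Perm.smul_def, Perm.smul_def, subLeft_apply, subLeft_apply,
    add_sub_cancel_left, add_sub_cancel_right, Set.pair_comm]

end SubLeft

theorem gtPerm_mem_towerSubgroup (m n : ℤ) : ∀ (k : ℕ) (x : ℤ),
    (gtPerm m n k x, Equiv.subLeft (m + n)) ∈
      towerSubgroup (Subgroup.zpowers (Equiv.subLeft (m + n))) k
  | 0, _ => Subgroup.mem_prod.mpr ⟨trivial, Subgroup.mem_zpowers _⟩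
  | k + 1, x => ⟨Subgroup.mem_zpowers _, Equiv.subLeft (m + n) ^ x, fun a => gtPerm m n k a ^ x,
      fun a => zpow_mem (gtPerm_mem_towerSubgroup m n k a) x, fun _ _ => rfl⟩

theorem gtorsion_eq_lengthwise (m n x : ℤ) : gtorsion m n x = lengthwise (gtPerm m n · x) := rfl

theorem gtorsion_bijOn_and_orbit_dvd_general (m n : ℤ) (x : ℤ) (k : ℕ) :
    (∀ t : List ℤ, (gtorsion m n x t).length = t.length) ∧
    Set.BijOn (gtorsion m n x)
      {t : List ℤ | t.length = k ∧ ∀ a ∈ t, a = m ∨ a = n}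
      {t : List ℤ | t.length = k ∧ ∀ a ∈ t, a = m ∨ a = n} ∧
    (∀ t : List ℤ, t.length = k → (∀ a ∈ t, a = m ∨ a = n) →
      Function.minimalPeriod (gtorsion m n x) t ∣ 2 ^ ((k + 1) / 2)) := by
  have hmem := gtPerm_mem_towerSubgroup m n k x
  have hstab := zpowers_subLeft_le_stabilizer_pair m n
  rw [gtorsion_eq_lengthwise]
  refine ⟨length_lengthwise _, bijOn_lengthwise _ (mapsTo_of_mem_towerSubgroup hstab hmem)
    (mapsTo_of_mem_towerSubgroup hstab (inv_mem hmem)), fun t ht _ => ?_⟩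
  exact minimalPeriod_lengthwise_toList_dvd _ (v := ⟨t, ht⟩)
    (pow_two_pow_eq_one_of_mem_towerSubgroup (sq_eq_one_of_mem_zpowers (subLeft_sq _)) hmem).1

/-- For distinct integers `m ≠ n` (possibly nonpositive) and any integer `x`, the
generalized torsion map `t ↦ C_{m,n}(x, t)` is a length-preserving bijection from
`{m, n}^k` to `{m, n}^k`, and every orbit has length dividing `2^⌈k/2⌉`. -/
theorem gtorsion_bijOn_and_orbit_dvd (m n : ℤ) (hmn : m ≠ n) (x : ℤ) (k : ℕ) (hk : 0 < k) :
    (∀ t : List ℤ, (gtorsion m n x t).length = t.length) ∧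
    Set.BijOn (gtorsion m n x)
      {t : List ℤ | t.length = k ∧ ∀ a ∈ t, a = m ∨ a = n}
      {t : List ℤ | t.length = k ∧ ∀ a ∈ t, a = m ∨ a = n} ∧
    (∀ t : List ℤ, t.length = k → (∀ a ∈ t, a = m ∨ a = n) →
      Function.minimalPeriod (gtorsion m n x) t ∣ 2 ^ ((k + 1) / 2)) :=
  gtorsion_bijOn_and_orbit_dvd_general m n x k
end

section
/- Let j > 0. Then the orbit of the sequence 1^{2j-1} (the constant sequence of 2j−1 ones) under the generalized torsion map t ↦ C_{1,0}(1, t) on {1, 0}^{2j-1} has length exactly 2^j. -/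
lemma gtorsion_cons (m n x a : ℤ) (l : List ℤ) :
    gtorsion m n x (a :: l) = (m + n - a) :: ((gtPerm m n l.length a ^ x) ⟨l, rfl⟩).1 := rfl

lemma gt_nil (x : ℤ) : gtorsion 1 0 x [] = [] := rfl

lemma f_cons1 (l : List ℤ) : gtorsion 1 0 1 (1 :: l) = 0 :: gtorsion 1 0 1 l := by
  rw [gtorsion_cons, zpow_one]; norm_num; rfl

lemma f_cons0 (l : List ℤ) : gtorsion 1 0 1 (0 :: l) = 1 :: gtorsion 1 0 0 l := by
  rw [gtorsion_cons, zpow_one]; norm_num; rfl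

lemma g_cons (a : ℤ) (l : List ℤ) : gtorsion 1 0 0 (a :: l) = (1 - a) :: l := by
  rw [gtorsion_cons, zpow_zero]; norm_num

lemma ff_cons (l : List ℤ) :
    gtorsion 1 0 1 (gtorsion 1 0 1 (1 :: 1 :: l)) = 1 :: 1 :: gtorsion 1 0 1 l := by
  rw [f_cons1, f_cons1, f_cons0, g_cons]; norm_num

lemma iter_even (s : ℕ) (l : List ℤ) :
    (gtorsion 1 0 1)^[2 * s] (1 :: 1 :: l) = 1 :: 1 :: (gtorsion 1 0 1)^[s] l := by
  induction s with
  | zero => rfl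
  | succ s ih =>
      have h : 2 * (s + 1) = (2 * s) + 1 + 1 := by ring
      rw [h, Function.iterate_succ_apply', Function.iterate_succ_apply', ih, ff_cons,
        Function.iterate_succ_apply']

lemma iter_odd (s : ℕ) (l : List ℤ) :
    (gtorsion 1 0 1)^[2 * s + 1] (1 :: 1 :: l)
      = 0 :: 0 :: gtorsion 1 0 1 ((gtorsion 1 0 1)^[s] l) := by
  rw [Function.iterate_succ_apply', iter_even, f_cons1, f_cons1]

lemma minPeriod_cons (l : List ℤ) (h : 0 < Function.minimalPeriod (gtorsion 1 0 1) l) :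
    Function.minimalPeriod (gtorsion 1 0 1) (1 :: 1 :: l)
      = 2 * Function.minimalPeriod (gtorsion 1 0 1) l := by
  set f := gtorsion 1 0 1 with hf
  set q := Function.minimalPeriod f l with hq
  have hql : Function.IsPeriodicPt f q l := Function.isPeriodicPt_minimalPeriod f l
  have hP : Function.IsPeriodicPt f (2 * q) (1 :: 1 :: l) := by
    show f^[2 * q] (1 :: 1 :: l) = 1 :: 1 :: l
    rw [iter_even, hql]
  set m := Function.minimalPeriod f (1 :: 1 :: l) with hm
  have hmpos : 0 < m := hP.minimalPeriod_pos (by positivity)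
  have hdvd : m ∣ 2 * q := hP.minimalPeriod_dvd
  have hmP : Function.IsPeriodicPt f m (1 :: 1 :: l) :=
    Function.isPeriodicPt_minimalPeriod f (1 :: 1 :: l)
  -- m is even
  obtain ⟨r, hr⟩ : ∃ r, m = 2 * r := by
    rcases Nat.even_or_odd m with he | ho
    · obtain ⟨s, hs⟩ := he; exact ⟨s, by omega⟩
    · exfalso
      obtain ⟨s, hs⟩ := ho
      have := hmP
      rw [Function.IsPeriodicPt, Function.IsFixedPt, hs, iter_odd] at this
      exact absurd (List.head_eq_of_cons_eq this) (by norm_num)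
  have hrpos : 0 < r := by omega
  have hrl : Function.IsPeriodicPt f r l := by
    have := hmP
    rw [Function.IsPeriodicPt, Function.IsFixedPt, hr, iter_even] at this
    have := List.tail_eq_of_cons_eq (List.tail_eq_of_cons_eq this)
    exact this
  have h1 : q ∣ r := hrl.minimalPeriod_dvd
  have h2 : r ∣ q := by
    have : 2 * r ∣ 2 * q := hr ▸ hdvd
    exact (mul_dvd_mul_iff_left (by norm_num : (2:ℕ) ≠ 0)).mp this
  rw [hr, Nat.dvd_antisymm h2 h1]

lemma minPeriod_one : Function.minimalPeriod (gtorsion 1 0 1) [(1:ℤ)] = 2 := by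
  have h1 : gtorsion 1 0 1 [(1:ℤ)] = [0] := by rw [f_cons1, gt_nil]
  have h0 : gtorsion 1 0 1 [(0:ℤ)] = [1] := by rw [f_cons0, gt_nil]
  have hP : Function.IsPeriodicPt (gtorsion 1 0 1) 2 [(1:ℤ)] := by
    show (gtorsion 1 0 1)^[2] [(1:ℤ)] = [(1:ℤ)]
    simp [Function.iterate_succ_apply', h1, h0]
  have hd := hP.minimalPeriod_dvd
  have hpos := hP.minimalPeriod_pos (by norm_num)
  have hle := Nat.le_of_dvd (by norm_num) hd
  have hne : Function.minimalPeriod (gtorsion 1 0 1) [(1:ℤ)] ≠ 1 := by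
    intro h
    have := Function.isPeriodicPt_minimalPeriod (gtorsion 1 0 1) [(1:ℤ)]
    rw [h] at this
    have h' : gtorsion 1 0 1 [(1:ℤ)] = [(1:ℤ)] := this
    rw [h1] at h'; simp at h'
  omega

lemma minPeriod_rep (i : ℕ) :
    Function.minimalPeriod (gtorsion 1 0 1) (List.replicate (2 * i + 1) (1 : ℤ)) = 2 ^ (i + 1) := by
  induction i with
  | zero => simpa using minPeriod_one
  | succ i ih =>
      have hrep : List.replicate (2 * (i + 1) + 1) (1 : ℤ)
          = 1 :: 1 :: List.replicate (2 * i + 1) (1 : ℤ) := by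
        have : 2 * (i + 1) + 1 = (2 * i + 1) + 1 + 1 := by ring
        rw [this, List.replicate_succ, List.replicate_succ]
      rw [hrep, minPeriod_cons _ (by rw [ih]; positivity), ih]
      ring


/-- For `j > 0`, the orbit of the all-ones sequence `1^{2j-1}` under the generalized
torsion map `t ↦ C_{1,0}(1, t)` on `{1, 0}^{2j-1}` has length exactly `2^j`. -/
theorem gtorsion_orbit_ones (j : ℕ) (hj : 0 < j) :
    Function.minimalPeriod (gtorsion 1 0 1) (List.replicate (2 * j - 1) (1 : ℤ)) = 2 ^ j := by
  obtain ⟨i, rfl⟩ : ∃ i, j = i + 1 := ⟨j - 1, by omega⟩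
  have h : 2 * (i + 1) - 1 = 2 * i + 1 := by omega
  rw [h, minPeriod_rep]
end
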